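/- arXiv:2303.06415 — 10 statements merged into one kernel-verified Lean document; each statement's English description precedes it below -/
import Mathlib

section
/- Let a : ℝ → ℝ be continuous with a(x) > 0 for all x, let H : ℝ × ℝ → ℝ be continuous and, for every R > 0, Lipschitz in its first argument on [-R,R] × ℝ with constant C_R. Suppose f₁, f₂ : ℝ → ℝ are bounded C¹ functions satisfying a(x)·f₁'(x) + H(f₁(x), x) = a(x)·f₂'(x) + H(f₂(x), x) for all x, and inf_{x ∈ ℝ} (f₂(x) - f₁(x)) = 0. Then for every δ > 0 and y₀ > 0 there exist L₁ < L₂ such that ∫_{L₁}^{L₂} dx / a(x) = y₀ and 0 ≤ f₂(x) - f₁(x) ≤ δ for all x ∈ [L₁, L₂]. -/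
open Set MeasureTheory intervalIntegral Real

/-!
Measure the line by `y(x) = ∫_{x₀}^x dt / a(t)`, so that `y' = 1 / a ≥ 1`. The Lipschitz bound on
`H` turns the equation into `(f₂ - f₁)' ≤ C_R y' (f₂ - f₁)`, hence `(f₂ - f₁) e^{-C_R y}` is
antitone and the gap grows at most by the factor `e^{C_R y₀}` on `[x₀, L]` with `y(L) = y₀`.
Starting from a point `x₀` where the gap is below `δ e^{-C_R y₀}` gives the interval.
-/

theorem le_mul_exp_sub_of_deriv_le {g g' y y' : ℝ → ℝ} {C : ℝ}
    (hg : ∀ x, HasDerivAt g (g' x) x) (hy : ∀ x, HasDerivAt y (y' x) x)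
    (hle : ∀ x, g' x ≤ C * y' x * g x) {x₀ x : ℝ} (hx : x₀ ≤ x) :
    g x ≤ g x₀ * exp (C * (y x - y x₀)) := by
  have hφ : ∀ t, HasDerivAt (fun t => g t * exp (-(C * y t)))
      ((g' t - C * y' t * g t) * exp (-(C * y t))) t := fun t =>
    ((hg t).mul ((hy t).const_mul C).neg.exp).congr_deriv (by simp only [Pi.neg_apply]; ring)
  have hanti : Antitone fun t => g t * exp (-(C * y t)) :=
    antitone_of_deriv_nonpos (fun t => (hφ t).differentiableAt) fun t => by
      rw [(hφ t).deriv]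
      exact mul_nonpos_of_nonpos_of_nonneg (by linarith [hle t]) (exp_pos _).le
  calc g x = g x * exp (-(C * y x)) * exp (C * y x) := by
        rw [mul_assoc, ← exp_add, neg_add_cancel, exp_zero, mul_one]
    _ ≤ g x₀ * exp (-(C * y x₀)) * exp (C * y x) :=
        mul_le_mul_of_nonneg_right (hanti hx) (exp_pos _).le
    _ = g x₀ * exp (C * (y x - y x₀)) := by
        rw [mul_assoc, ← exp_add]
        ring_nf

theorem exists_gt_intervalIntegral_eq {f : ℝ → ℝ} (hf : Continuous f) (hf_ge : ∀ x, 1 ≤ f x)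
    (x₀ : ℝ) {y₀ : ℝ} (hy₀ : 0 < y₀) : ∃ L, x₀ < L ∧ ∫ x in x₀..L, f x = y₀ := by
  have hF : Continuous fun L => ∫ x in x₀..L, f x :=
    continuous_primitive (fun _ _ => hf.intervalIntegrable _ _) x₀
  have hgrow : y₀ ≤ ∫ x in x₀..x₀ + y₀, f x := by
    simpa using integral_mono_on (by linarith) (intervalIntegrable_const (μ := volume))
      (hf.intervalIntegrable x₀ (x₀ + y₀)) fun x _ => hf_ge x
  obtain ⟨L, hL, hFL⟩ := intermediate_value_Icc (by linarith : x₀ ≤ x₀ + y₀) hF.continuousOn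
    (⟨by simpa using hy₀.le, hgrow⟩ : y₀ ∈ Icc (∫ x in x₀..x₀, f x) (∫ x in x₀..x₀ + y₀, f x))
  refine ⟨L, lt_of_le_of_ne hL.1 ?_, hFL⟩
  rintro rfl
  exact hy₀.ne (integral_same.symm.trans hFL)

theorem exists_deriv_sub_le_of_lipschitz {a f₁ f₂ f₁' f₂' : ℝ → ℝ} {H : ℝ → ℝ → ℝ}
    (ha_pos : ∀ x, 0 < a x)
    (hH_lip : ∀ R > (0 : ℝ), ∃ C : ℝ, ∀ p ∈ Icc (-R) R, ∀ q ∈ Icc (-R) R, ∀ x : ℝ,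
      |H p x - H q x| ≤ C * |p - q|)
    (hb₁ : ∃ B, ∀ x, |f₁ x| ≤ B) (hb₂ : ∃ B, ∀ x, |f₂ x| ≤ B)
    (heq : ∀ x, a x * f₁' x + H (f₁ x) x = a x * f₂' x + H (f₂ x) x)
    (hle : ∀ x, f₁ x ≤ f₂ x) :
    ∃ C, 0 ≤ C ∧ ∀ x, f₂' x - f₁' x ≤ C * (1 / a x) * (f₂ x - f₁ x) := by
  obtain ⟨B₁, hB₁⟩ := hb₁
  obtain ⟨B₂, hB₂⟩ := hb₂
  set R := max (max B₁ B₂) 1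
  obtain ⟨C, hC⟩ := hH_lip R (one_pos.trans_le (le_max_right _ _))
  refine ⟨max C 0, le_max_right _ _, fun x => ?_⟩
  have hmem₁ : f₁ x ∈ Icc (-R) R :=
    abs_le.mp ((hB₁ x).trans ((le_max_left _ _).trans (le_max_left _ _)))
  have hmem₂ : f₂ x ∈ Icc (-R) R :=
    abs_le.mp ((hB₂ x).trans ((le_max_right _ _).trans (le_max_left _ _)))
  have hlip := hC _ hmem₁ _ hmem₂ x
  rw [abs_sub_comm (f₁ x), abs_of_nonneg (sub_nonneg.mpr (hle x))] at hlip
  have hgap : a x * (f₂' x - f₁' x) ≤ max C 0 * (f₂ x - f₁ x) := calc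
    a x * (f₂' x - f₁' x) = H (f₁ x) x - H (f₂ x) x := by linarith [heq x]
    _ ≤ C * (f₂ x - f₁ x) := (le_abs_self _).trans hlip
    _ ≤ max C 0 * (f₂ x - f₁ x) :=
        mul_le_mul_of_nonneg_right (le_max_left _ _) (sub_nonneg.mpr (hle x))
  rw [mul_comm _ (1 / a x), mul_assoc, one_div_mul_eq_div, le_div_iff₀ (ha_pos x), mul_comm]
  exact hgap

theorem stmt0_general
    (a : ℝ → ℝ) (ha_cont : Continuous a) (ha_pos : ∀ x, 0 < a x) (ha_le : ∀ x, a x ≤ 1)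
    (H : ℝ → ℝ → ℝ)
    (hH_lip : ∀ R > (0 : ℝ), ∃ C : ℝ, ∀ p ∈ Icc (-R) R, ∀ q ∈ Icc (-R) R, ∀ x : ℝ,
      |H p x - H q x| ≤ C * |p - q|)
    (f₁ f₂ f₁' f₂' : ℝ → ℝ)
    (hf₁ : ∀ x, HasDerivAt f₁ (f₁' x) x) (hf₂ : ∀ x, HasDerivAt f₂ (f₂' x) x)
    (hb₁ : ∃ B, ∀ x, |f₁ x| ≤ B) (hb₂ : ∃ B, ∀ x, |f₂ x| ≤ B)
    (heq : ∀ x, a x * f₁' x + H (f₁ x) x = a x * f₂' x + H (f₂ x) x)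
    (hinf : IsGLB (Set.range fun x => f₂ x - f₁ x) 0) :
    ∀ δ > (0 : ℝ), ∀ y₀ > (0 : ℝ), ∃ L₁ L₂ : ℝ, L₁ < L₂ ∧
      (∫ x in L₁..L₂, 1 / a x) = y₀ ∧
      ∀ x ∈ Icc L₁ L₂, 0 ≤ f₂ x - f₁ x ∧ f₂ x - f₁ x ≤ δ := by
  intro δ hδ y₀ hy₀
  have hgap_nonneg : ∀ x, 0 ≤ f₂ x - f₁ x := fun x => hinf.1 ⟨x, rfl⟩
  obtain ⟨C, hC, hderiv⟩ := exists_deriv_sub_le_of_lipschitz ha_pos hH_lip hb₁ hb₂ heq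
    fun x => sub_nonneg.mp (hgap_nonneg x)
  obtain ⟨_, ⟨x₀, rfl⟩, -, hx₀⟩ := hinf.exists_between (mul_pos hδ (exp_pos (-(C * y₀))))
  have ha_inv : Continuous fun x => 1 / a x :=
    continuous_const.div ha_cont fun x => (ha_pos x).ne'
  obtain ⟨L, hL, hint⟩ := exists_gt_intervalIntegral_eq ha_inv
    (fun x => one_le_one_div (ha_pos x) (ha_le x)) x₀ hy₀
  refine ⟨x₀, L, hL, hint, fun x hx => ⟨hgap_nonneg x, ?_⟩⟩
  have hy : ∀ t, HasDerivAt (fun x => ∫ t in x₀..x, 1 / a t) (1 / a t) t := fun t =>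
    (ha_inv.integral_hasStrictDerivAt x₀ t).hasDerivAt
  have hyx : ∫ t in x₀..x, 1 / a t ≤ y₀ := hint ▸ integral_mono_interval le_rfl hx.1 hx.2
    (ae_of_all _ fun t => (one_div_pos.mpr (ha_pos t)).le) (ha_inv.intervalIntegrable _ _)
  calc f₂ x - f₁ x
      ≤ (f₂ x₀ - f₁ x₀) * exp (C * ((∫ t in x₀..x, 1 / a t) - ∫ t in x₀..x₀, 1 / a t)) :=
        le_mul_exp_sub_of_deriv_le (fun t => (hf₂ t).sub (hf₁ t)) hy hderiv hx.1
    _ ≤ δ * exp (-(C * y₀)) * exp (C * y₀) := by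
        rw [integral_same, sub_zero]
        gcongr
    _ = δ := by rw [mul_assoc, ← exp_add, neg_add_cancel, exp_zero, mul_one]

/-- Lemma A.8 (Lemma `lem:charac`): if two bounded C¹ solutions of the same first-order
ODE have infimum gap 0, then on intervals of any prescribed `1/a`-length the gap is ≤ δ. -/
theorem stmt0
    (a : ℝ → ℝ) (ha_cont : Continuous a) (ha_pos : ∀ x, 0 < a x) (ha_le : ∀ x, a x ≤ 1)
    (H : ℝ → ℝ → ℝ) (hH_cont : Continuous (fun q : ℝ × ℝ => H q.1 q.2))
    (hH_lip : ∀ R > (0 : ℝ), ∃ C : ℝ, ∀ p ∈ Icc (-R) R, ∀ q ∈ Icc (-R) R, ∀ x : ℝ,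
      |H p x - H q x| ≤ C * |p - q|)
    (f₁ f₂ f₁' f₂' : ℝ → ℝ)
    (hf₁ : ∀ x, HasDerivAt f₁ (f₁' x) x) (hf₂ : ∀ x, HasDerivAt f₂ (f₂' x) x)
    (hf₁c : Continuous f₁') (hf₂c : Continuous f₂')
    (hb₁ : ∃ B, ∀ x, |f₁ x| ≤ B) (hb₂ : ∃ B, ∀ x, |f₂ x| ≤ B)
    (heq : ∀ x, a x * f₁' x + H (f₁ x) x = a x * f₂' x + H (f₂ x) x)
    (hinf : IsGLB (Set.range fun x => f₂ x - f₁ x) 0) :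
    ∀ δ > (0 : ℝ), ∀ y₀ > (0 : ℝ), ∃ L₁ L₂ : ℝ, L₁ < L₂ ∧
      (∫ x in L₁..L₂, 1 / a x) = y₀ ∧
      ∀ x ∈ Icc L₁ L₂, 0 ≤ f₂ x - f₁ x ∧ f₂ x - f₁ x ≤ δ :=
  stmt0_general a ha_cont ha_pos ha_le H hH_lip f₁ f₂ f₁' f₂' hf₁ hf₂ hb₁ hb₂ heq hinf
end

section
/- Let a : ℝ → ℝ be continuous with a(x) > 0 for all x, and let H : ℝ × ℝ → ℝ be continuous, coercive in p uniformly in x (i.e., α(|p|) ≤ H(p,x) ≤ β(|p|) for coercive functions α, β : [0,∞) → ℝ), and locally Lipschitz in p uniformly in x. Suppose m, M : ℝ → ℝ are bounded C¹ functions with m(x) < M(x) for all x, satisfying the strict inequalities a(x)·m'(x) + H(m(x), x) < 0 < a(x)·M'(x) + H(M(x), x) for all x ∈ ℝ. Then there exists f ∈ C¹(ℝ) with a(x)·f'(x) + H(f(x), x) = 0 and m(x) < f(x) < M(x) for all x ∈ ℝ. -/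
/-!
Write the equation as `f' = F(t, f)` with `F(t, p) = -H(p, t) / a(t)`, and clamp `p` to `[-K, K]`
where `K` bounds `m` and `M`: this leaves the equation unchanged between `m` and `M` but makes `F`
bounded and Lipschitz in `p` on every strip `[c, d] × ℝ`, so Picard–Lindelöf gives solutions on
whole compact intervals. Let `uₙ` solve `u' = F(t, u)` on `[-n, n]` with `uₙ(-n) = M(-n)`. At a
contact point with `m` or `M` the strict inequalities make `uₙ` cross in the wrong direction, so
the fencing theorem keeps `m ≤ uₙ ≤ M`. Hence `uₙ₊₁(-n) ≤ uₙ(-n)`, and since solutions that meet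
coincide, `uₙ₊₁ ≤ uₙ` on `[-n, n]`. The decreasing limit `f` is locally Lipschitz, satisfies the
integral equation by dominated convergence, and is therefore a `C¹` solution; it cannot touch `m`
or `M`, because at a touching point the derivatives would have to agree.
-/

open Set Filter Function Topology NNReal intervalIntegral

section General

variable {E : Type*} [NormedAddCommGroup E] [NormedSpace ℝ E]

def IsSolutionOn (F : ℝ → E → E) (g : ℝ → E) (c d : ℝ) : Prop :=
  ∀ t ∈ Icc c d, HasDerivWithinAt g (F t (g t)) (Icc c d) t

namespace IsSolutionOn

variable {F : ℝ → E → E} {g : ℝ → E} {c d : ℝ}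

theorem continuousOn (hg : IsSolutionOn F g c d) : ContinuousOn g (Icc c d) :=
  fun t ht => (hg t ht).continuousWithinAt

theorem mono (hg : IsSolutionOn F g c d) {c' d' : ℝ} (hc : c ≤ c') (hd : d' ≤ d) :
    IsSolutionOn F g c' d' := fun t ht =>
  (hg t ⟨hc.trans ht.1, ht.2.trans hd⟩).mono (Icc_subset_Icc hc hd)

theorem hasDerivWithinAt_Ici (hg : IsSolutionOn F g c d) {t : ℝ} (ht : t ∈ Ico c d) :
    HasDerivWithinAt g (F t (g t)) (Ici t) t :=
  (hg t (Ico_subset_Icc_self ht)).mono_of_mem_nhdsWithin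
    (mem_of_superset (Icc_mem_nhdsGE ht.2) (Icc_subset_Icc_left ht.1))

theorem hasDerivAt (hg : IsSolutionOn F g c d) {t : ℝ} (ht : t ∈ Ioo c d) :
    HasDerivAt g (F t (g t)) t :=
  (hg t (Ioo_subset_Icc_self ht)).hasDerivAt (Icc_mem_nhds ht.1 ht.2)

theorem norm_sub_le (hg : IsSolutionOn F g c d) {C : ℝ} (hC : ∀ t ∈ Icc c d, ∀ p, ‖F t p‖ ≤ C)
    {x y : ℝ} (hx : x ∈ Icc c d) (hy : y ∈ Icc c d) : ‖g y - g x‖ ≤ C * ‖y - x‖ :=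
  (convex_Icc c d).norm_image_sub_le_of_norm_hasDerivWithin_le hg (fun t ht => hC t ht _) hx hy

end IsSolutionOn

/-- As the field is bounded on all of `E`, the Picard–Lindelöf ball can have radius `C (d - c)`. -/
theorem exists_isSolutionOn [CompleteSpace E] {F : ℝ → E → E} {c d : ℝ} (hcd : c ≤ d)
    {L : ℝ≥0} {C : ℝ} (hcont : ∀ p, ContinuousOn (F · p) (Icc c d))
    (hlip : ∀ t ∈ Icc c d, LipschitzWith L (F t)) (hbdd : ∀ t ∈ Icc c d, ∀ p, ‖F t p‖ ≤ C)
    (y : E) : ∃ g, g c = y ∧ IsSolutionOn F g c d := by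
  have hpl : IsPicardLindelof F (tmin := c) (tmax := d) ⟨c, le_rfl, hcd⟩ y
      (C.toNNReal * (d - c).toNNReal) 0 C.toNNReal L :=
    { lipschitzOnWith := fun t ht => (hlip t ht).lipschitzOnWith
      continuousOn := fun p _ => hcont p
      norm_le := fun t ht p _ => (hbdd t ht p).trans (Real.le_coe_toNNReal C)
      mul_max_le := by simp [hcd] }
  exact hpl.exists_eq_forall_mem_Icc_hasDerivWithinAt₀

variable {F : ℝ → E → E} {u : ℕ → ℝ → E} {f : ℝ → E}

theorem continuous_of_tendsto_isSolutionOn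
    (hbdd : ∀ c d, ∃ C, ∀ t ∈ Icc c d, ∀ p, ‖F t p‖ ≤ C)
    (hu : ∀ n : ℕ, IsSolutionOn F (u n) (-n) n) (hlim : ∀ t, Tendsto (u · t) atTop (𝓝 (f t))) :
    Continuous f := by
  refine continuous_iff_continuousAt.2 fun x => ?_
  obtain ⟨C, hC⟩ := hbdd (-(|x| + 1)) (|x| + 1)
  refine continuousAt_of_locally_lipschitz one_pos C fun y hy => ?_
  have hx : x ∈ Icc (-(|x| + 1)) (|x| + 1) := abs_le.1 (by linarith)
  have hy : y ∈ Icc (-(|x| + 1)) (|x| + 1) :=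
    abs_le.1 (by linarith [abs_sub_abs_le_abs_sub y x, Real.dist_eq y x])
  have hn : ∀ᶠ n : ℕ in atTop, dist (u n y) (u n x) ≤ C * dist y x := by
    filter_upwards [eventually_ge_atTop ⌈|x| + 1⌉₊] with n hn
    have hA : |x| + 1 ≤ n := Nat.ceil_le.1 hn
    simpa only [dist_eq_norm] using ((hu n).mono (neg_le_neg hA) hA).norm_sub_le hC hx hy
  exact le_of_tendsto ((hlim y).dist (hlim x)) hn

theorem sub_eq_integral_of_tendsto_isSolutionOn [CompleteSpace E] (hF : Continuous (uncurry F))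
    (hbdd : ∀ c d, ∃ C, ∀ t ∈ Icc c d, ∀ p, ‖F t p‖ ≤ C)
    (hu : ∀ n : ℕ, IsSolutionOn F (u n) (-n) n) (hlim : ∀ t, Tendsto (u · t) atTop (𝓝 (f t)))
    (x : ℝ) : f x - f 0 = ∫ t in (0 : ℝ)..x, F t (f t) := by
  obtain ⟨C, hC⟩ := hbdd (-|x|) |x|
  have hsub : uIcc 0 x ⊆ Icc (-|x|) |x| := fun t ht =>
    abs_le.1 (by simpa using abs_sub_left_of_mem_uIcc ht)
  have hder : ∀ᶠ n : ℕ in atTop, ∀ t ∈ uIcc 0 x, HasDerivAt (u n) (F t (u n t)) t := by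
    filter_upwards [eventually_gt_atTop ⌈|x|⌉₊] with n hn t ht
    have hxn : |x| < n := Nat.lt_of_ceil_lt hn
    exact (hu n).hasDerivAt ⟨by linarith [(hsub ht).1], by linarith [(hsub ht).2]⟩
  have hcont : ∀ᶠ n : ℕ in atTop, ContinuousOn (fun t => F t (u n t)) (uIcc 0 x) := by
    filter_upwards [hder] with n hn
    exact hF.comp_continuousOn (continuousOn_id.prodMk (HasDerivAt.continuousOn hn))
  have hFTC : ∀ᶠ n : ℕ in atTop, u n x - u n 0 = ∫ t in (0 : ℝ)..x, F t (u n t) := by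
    filter_upwards [hder, hcont] with n hn hn'
    exact (integral_eq_sub_of_hasDerivAt hn hn'.intervalIntegrable).symm
  refine tendsto_nhds_unique (((hlim x).sub (hlim 0)).congr' hFTC) ?_
  refine tendsto_integral_filter_of_dominated_convergence (fun _ => C) ?_ ?_
    intervalIntegrable_const ?_
  · filter_upwards [hcont] with n hn
    exact (hn.mono uIoc_subset_uIcc).aestronglyMeasurable measurableSet_uIoc
  · exact Eventually.of_forall fun n =>
      MeasureTheory.ae_of_all _ fun t ht => hC t (hsub (uIoc_subset_uIcc ht)) _
  · exact MeasureTheory.ae_of_all _ fun t _ => ((hF.uncurry_left t).tendsto (f t)).comp (hlim t)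

theorem hasDerivAt_of_tendsto_isSolutionOn [CompleteSpace E] (hF : Continuous (uncurry F))
    (hbdd : ∀ c d, ∃ C, ∀ t ∈ Icc c d, ∀ p, ‖F t p‖ ≤ C)
    (hu : ∀ n : ℕ, IsSolutionOn F (u n) (-n) n) (hlim : ∀ t, Tendsto (u · t) atTop (𝓝 (f t)))
    (x : ℝ) : HasDerivAt f (F x (f x)) x := by
  have hG : Continuous fun t => F t (f t) :=
    hF.comp (continuous_id.prodMk (continuous_of_tendsto_isSolutionOn hbdd hu hlim))
  refine ((hG.integral_hasStrictDerivAt 0 x).hasDerivAt.const_add (f 0)).congr_of_eventuallyEq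
    (Eventually.of_forall fun y => ?_)
  exact sub_eq_iff_eq_add'.1 (sub_eq_integral_of_tendsto_isSolutionOn hF hbdd hu hlim y)

end General

section Real

variable {F : ℝ → ℝ → ℝ} {g m M m' M' : ℝ → ℝ} {c d : ℝ}

namespace IsSolutionOn

theorem le_of_strictSupersolution (hg : IsSolutionOn F g c d)
    (hM : ∀ t, HasDerivAt M (M' t) t) (hsup : ∀ t, F t (M t) < M' t) (hc : g c ≤ M c) :
    ∀ t ∈ Icc c d, g t ≤ M t :=
  image_le_of_deriv_right_lt_deriv_boundary' hg.continuousOn (fun _ => hg.hasDerivWithinAt_Ici)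
    hc (HasDerivAt.continuousOn fun t _ => hM t) (fun t _ => (hM t).hasDerivWithinAt)
    (fun t _ ht => ht ▸ hsup t)

theorem ge_of_strictSubsolution (hg : IsSolutionOn F g c d)
    (hm : ∀ t, HasDerivAt m (m' t) t) (hsub : ∀ t, m' t < F t (m t)) (hc : m c ≤ g c) :
    ∀ t ∈ Icc c d, m t ≤ g t :=
  image_le_of_deriv_right_lt_deriv_boundary' (HasDerivAt.continuousOn fun t _ => hm t)
    (fun t _ => (hm t).hasDerivWithinAt) hc hg.continuousOn (fun _ => hg.hasDerivWithinAt_Ici)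
    (fun t _ ht => ht ▸ hsub t)

theorem le_of_le {L : ℝ≥0} (hlip : ∀ t ∈ Icc c d, LipschitzWith L (F t)) {g₁ g₂ : ℝ → ℝ}
    (h₁ : IsSolutionOn F g₁ c d) (h₂ : IsSolutionOn F g₂ c d) (hc : g₁ c ≤ g₂ c) :
    ∀ t ∈ Icc c d, g₁ t ≤ g₂ t := by
  intro t ht
  by_contra! hlt
  obtain ⟨s, hs, hs0⟩ : ∃ s ∈ Icc c t, g₁ s - g₂ s = 0 :=
    intermediate_value_Icc ht.1
      ((h₁.continuousOn.sub h₂.continuousOn).mono (Icc_subset_Icc_right ht.2))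
      ⟨sub_nonpos.2 hc, (sub_pos.2 hlt).le⟩
  have h₁' := h₁.mono hs.1 ht.2
  have h₂' := h₂.mono hs.1 ht.2
  have hst : g₁ t = g₂ t :=
    ODE_solution_unique_of_mem_Icc_right (s := fun _ => univ)
      (fun r hr => (hlip r ⟨hs.1.trans hr.1, hr.2.le.trans ht.2⟩).lipschitzOnWith)
      h₁'.continuousOn (fun _ => h₁'.hasDerivWithinAt_Ici) (fun _ _ => mem_univ _)
      h₂'.continuousOn (fun _ => h₂'.hasDerivWithinAt_Ici) (fun _ _ => mem_univ _)
      (sub_eq_zero.1 hs0) ⟨hs.2, le_rfl⟩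
  exact hlt.ne' hst

end IsSolutionOn

theorem HasDerivAt.eq_of_le_of_eq {f : ℝ → ℝ} {f' g' x : ℝ} (hle : ∀ t, g t ≤ f t)
    (hx : g x = f x) (hf : HasDerivAt f f' x) (hg : HasDerivAt g g' x) : g' = f' := by
  have hmin : IsLocalMin (f - g) x :=
    Eventually.of_forall fun t => by simp only [Pi.sub_apply, hx, sub_self, sub_nonneg, hle t]
  exact (sub_eq_zero.1 (hmin.hasDerivAt_eq_zero (hf.sub hg))).symm

theorem exists_antitone_isSolutionOn_between (hF : Continuous (uncurry F))
    (hlip : ∀ c d, ∃ L : ℝ≥0, ∀ t ∈ Icc c d, LipschitzWith L (F t))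
    (hbdd : ∀ c d, ∃ C, ∀ t ∈ Icc c d, ∀ p, ‖F t p‖ ≤ C)
    (hm : ∀ t, HasDerivAt m (m' t) t) (hM : ∀ t, HasDerivAt M (M' t) t)
    (hsub : ∀ t, m' t < F t (m t)) (hsup : ∀ t, F t (M t) < M' t) (hmM : ∀ t, m t ≤ M t) :
    ∃ u : ℕ → ℝ → ℝ, (∀ n : ℕ, IsSolutionOn F (u n) (-n) n) ∧
      (∀ n t, m t ≤ u n t ∧ u n t ≤ M t) ∧ ∀ t, Antitone (u · t) := by
  have hsol (n : ℕ) : ∃ g, g (-n) = M (-n) ∧ IsSolutionOn F g (-n) n := by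
    obtain ⟨L, hL⟩ := hlip (-n) n
    obtain ⟨C, hC⟩ := hbdd (-n) n
    exact exists_isSolutionOn (neg_le_self n.cast_nonneg)
      (fun p => (hF.uncurry_right p).continuousOn) hL hC _
  choose g hg₀ hg using hsol
  have hgM (n : ℕ) := (hg n).le_of_strictSupersolution hM hsup (hg₀ n).le
  have hmg (n : ℕ) := (hg n).ge_of_strictSubsolution hm hsub (hg₀ n ▸ hmM _)
  classical
  -- Extending `g n` by `M` outside `[-n, n]` makes the sequence antitone on all of `ℝ`.
  refine ⟨fun n t => if t ∈ Icc (-n : ℝ) n then g n t else M t, fun n t ht => ?_,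
    fun n t => ?_, fun t => antitone_nat_of_succ_le fun n => ?_⟩
  · simp only [if_pos ht]
    exact (hg n t ht).congr (fun s hs => if_pos hs) (if_pos ht)
  · dsimp only
    split_ifs with ht
    exacts [⟨hmg n t ht, hgM n t ht⟩, ⟨hmM t, le_rfl⟩]
  · have hn : (0 : ℝ) ≤ n := n.cast_nonneg
    have hsucc : Icc (-n : ℝ) n ⊆ Icc (-(n + 1 : ℕ) : ℝ) (n + 1 : ℕ) :=
      Icc_subset_Icc (by push_cast; linarith) (by push_cast; linarith)
    dsimp only
    by_cases ht : t ∈ Icc (-n : ℝ) n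
    · simp only [if_pos ht, if_pos (hsucc ht)]
      obtain ⟨L, hL⟩ := hlip (-n) n
      have hstart : g (n + 1) (-n) ≤ g n (-n) :=
        hg₀ n ▸ hgM (n + 1) _ (hsucc ⟨le_rfl, by linarith⟩)
      exact ((hg (n + 1)).mono (by push_cast; linarith) (by push_cast; linarith)).le_of_le hL
        (hg n) hstart t ht
    · simp only [if_neg ht]
      split_ifs with ht'
      exacts [hgM (n + 1) t ht', le_rfl]

theorem exists_hasDerivAt_between (hF : Continuous (uncurry F))
    (hlip : ∀ c d, ∃ L : ℝ≥0, ∀ t ∈ Icc c d, LipschitzWith L (F t))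
    (hbdd : ∀ c d, ∃ C, ∀ t ∈ Icc c d, ∀ p, ‖F t p‖ ≤ C)
    (hm : ∀ t, HasDerivAt m (m' t) t) (hM : ∀ t, HasDerivAt M (M' t) t)
    (hsub : ∀ t, m' t < F t (m t)) (hsup : ∀ t, F t (M t) < M' t) (hmM : ∀ t, m t ≤ M t) :
    ∃ f : ℝ → ℝ, (∀ t, HasDerivAt f (F t (f t)) t) ∧ ∀ t, m t < f t ∧ f t < M t := by
  obtain ⟨u, hu, hbetween, hanti⟩ :=
    exists_antitone_isSolutionOn_between hF hlip hbdd hm hM hsub hsup hmM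
  have hbdd' (t : ℝ) : BddBelow (range (u · t)) :=
    ⟨m t, forall_mem_range.2 fun n => (hbetween n t).1⟩
  have hf := hasDerivAt_of_tendsto_isSolutionOn hF hbdd hu
    fun t => tendsto_atTop_ciInf (hanti t) (hbdd' t)
  have hmf (t : ℝ) : m t ≤ ⨅ n, u n t := le_ciInf fun n => (hbetween n t).1
  have hfM (t : ℝ) : ⨅ n, u n t ≤ M t := (ciInf_le (hbdd' t) 0).trans (hbetween 0 t).2
  refine ⟨fun t => ⨅ n, u n t, hf, fun t => ⟨(hmf t).lt_of_ne fun h => ?_,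
    (hfM t).lt_of_ne fun h => ?_⟩⟩
  · have := (hf t).eq_of_le_of_eq hmf h (hm t)
    exact (hsub t).ne (h ▸ this)
  · have := (hM t).eq_of_le_of_eq hfM h (hf t)
    exact (hsup t).ne (h ▸ this)

end Real

noncomputable def clampedField (a : ℝ → ℝ) (H : ℝ → ℝ → ℝ) {K : ℝ} (hK : -K ≤ K) (t p : ℝ) :
    ℝ :=
  -H (projIcc (-K) K hK p) t / a t

section ClampedField

variable {a : ℝ → ℝ} {H : ℝ → ℝ → ℝ} {K : ℝ} (hK : -K ≤ K)

theorem clampedField_of_mem {t p : ℝ} (hp : p ∈ Icc (-K) K) :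
    clampedField a H hK t p = -H p t / a t := by
  rw [clampedField, projIcc_of_mem hK hp]

theorem continuous_clampedField (ha : Continuous a) (ha₀ : ∀ t, a t ≠ 0)
    (hH : Continuous fun q : ℝ × ℝ => H q.1 q.2) :
    Continuous (uncurry (clampedField a H hK)) := by
  have hproj : Continuous fun q : ℝ × ℝ => (projIcc (-K) K hK q.2 : ℝ) :=
    continuous_subtype_val.comp (continuous_projIcc.comp continuous_snd)
  exact (hH.comp (hproj.prodMk continuous_fst)).neg.div (ha.comp continuous_fst) fun q => ha₀ q.1

theorem exists_norm_clampedField_le (hcont : Continuous (uncurry (clampedField a H hK)))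
    (c d : ℝ) : ∃ C, ∀ t ∈ Icc c d, ∀ p, ‖clampedField a H hK t p‖ ≤ C := by
  obtain ⟨C, hC⟩ := (isCompact_Icc.prod isCompact_Icc).exists_bound_of_continuousOn
    (hcont.continuousOn (s := Icc c d ×ˢ Icc (-K) K))
  refine ⟨C, fun t ht p => ?_⟩
  simpa [clampedField, projIcc_val] using hC (t, projIcc (-K) K hK p) ⟨ht, (projIcc _ _ hK p).2⟩

theorem exists_lipschitzWith_clampedField (ha : Continuous a) (ha₀ : ∀ t, a t ≠ 0) {C : ℝ}
    (hH : ∀ p ∈ Icc (-K) K, ∀ q ∈ Icc (-K) K, ∀ x, |H p x - H q x| ≤ C * |p - q|) (c d : ℝ) :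
    ∃ L : ℝ≥0, ∀ t ∈ Icc c d, LipschitzWith L (clampedField a H hK t) := by
  obtain ⟨B, hB⟩ := isCompact_Icc.exists_bound_of_continuousOn (s := Icc c d)
    (ha.inv₀ ha₀).continuousOn
  refine ⟨(B * max C 0).toNNReal, fun t ht => LipschitzWith.of_dist_le_mul fun p q => ?_⟩
  have hB₀ : 0 ≤ B := (norm_nonneg _).trans (hB t ht)
  have hpq : |(projIcc (-K) K hK p : ℝ) - projIcc (-K) K hK q| ≤ |p - q| := by
    simpa only [NNReal.coe_one, one_mul, Subtype.dist_eq, Real.dist_eq] using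
      (LipschitzWith.projIcc hK).dist_le_mul p q
  calc dist (clampedField a H hK t p) (clampedField a H hK t q)
      = |(a t)⁻¹| * |H (projIcc (-K) K hK p) t - H (projIcc (-K) K hK q) t| := by
        rw [Real.dist_eq, clampedField, clampedField, ← abs_mul, ← abs_neg]
        congr 1
        ring
    _ ≤ B * (max C 0 * |p - q|) := by
        refine mul_le_mul (hB t ht) ?_ (abs_nonneg _) hB₀
        exact (hH _ (projIcc _ _ hK p).2 _ (projIcc _ _ hK q).2 t).trans
          (mul_le_mul (le_max_left _ _) hpq (abs_nonneg _) (le_max_right _ _))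
    _ ≤ (B * max C 0).toNNReal * dist p q := by
        rw [← mul_assoc, Real.dist_eq]
        exact mul_le_mul_of_nonneg_right (Real.le_coe_toNNReal _) (abs_nonneg _)

end ClampedField

theorem stmt1_general
    (a : ℝ → ℝ) (ha_cont : Continuous a) (ha_pos : ∀ x, 0 < a x)
    (H : ℝ → ℝ → ℝ) (hH_cont : Continuous (fun q : ℝ × ℝ => H q.1 q.2))
    (hH_lip : ∀ R > (0 : ℝ), ∃ C : ℝ, ∀ p ∈ Icc (-R) R, ∀ q ∈ Icc (-R) R, ∀ x : ℝ,
      |H p x - H q x| ≤ C * |p - q|)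
    (m M m' M' : ℝ → ℝ)
    (hm : ∀ x, HasDerivAt m (m' x) x) (hM : ∀ x, HasDerivAt M (M' x) x)
    (hmb : ∃ B, ∀ x, |m x| ≤ B) (hMb : ∃ B, ∀ x, |M x| ≤ B)
    (hmM : ∀ x, m x < M x)
    (hsub : ∀ x, a x * m' x + H (m x) x < 0)
    (hsup : ∀ x, 0 < a x * M' x + H (M x) x) :
    ∃ f f' : ℝ → ℝ, (∀ x, HasDerivAt f (f' x) x) ∧ Continuous f' ∧
      (∀ x, a x * f' x + H (f x) x = 0) ∧ ∀ x, m x < f x ∧ f x < M x := by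
  obtain ⟨Bm, hBm⟩ := hmb
  obtain ⟨BM, hBM⟩ := hMb
  set K := max (max Bm BM) 1
  have hK₀ : 0 < K := zero_lt_one.trans_le (le_max_right _ _)
  have hK : -K ≤ K := by linarith
  have hmK (x : ℝ) : m x ∈ Icc (-K) K :=
    abs_le.1 ((hBm x).trans ((le_max_left _ _).trans (le_max_left _ _)))
  have hMK (x : ℝ) : M x ∈ Icc (-K) K :=
    abs_le.1 ((hBM x).trans ((le_max_right _ _).trans (le_max_left _ _)))
  have ha₀ (x : ℝ) : a x ≠ 0 := (ha_pos x).ne'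
  have hF : Continuous (uncurry (clampedField a H hK)) :=
    continuous_clampedField hK ha_cont ha₀ hH_cont
  have hsub' (x : ℝ) : m' x < clampedField a H hK x (m x) := by
    rw [clampedField_of_mem hK (hmK x), lt_div_iff₀ (ha_pos x)]
    linarith [hsub x]
  have hsup' (x : ℝ) : clampedField a H hK x (M x) < M' x := by
    rw [clampedField_of_mem hK (hMK x), div_lt_iff₀ (ha_pos x)]
    linarith [hsup x]
  obtain ⟨C, hC⟩ := hH_lip K hK₀
  obtain ⟨f, hf, hbetween⟩ := exists_hasDerivAt_between hF
    (exists_lipschitzWith_clampedField hK ha_cont ha₀ hC) (exists_norm_clampedField_le hK hF)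
    hm hM hsub' hsup' fun x => (hmM x).le
  refine ⟨f, fun x => clampedField a H hK x (f x), hf, hF.comp (continuous_id.prodMk
    (continuous_iff_continuousAt.2 fun x => (hf x).continuousAt)), fun x => ?_, hbetween⟩
  have hfK : f x ∈ Icc (-K) K :=
    ⟨(hmK x).1.trans (hbetween x).1.le, (hbetween x).2.le.trans (hMK x).2⟩
  dsimp only
  rw [clampedField_of_mem hK hfK, mul_div_cancel₀ _ (ha₀ x)]
  ring

/-- Lemma A.7, first alternative: a C¹ solution can be inserted between a strict
subsolution `m` and a strict supersolution `M` of the first-order ODE. -/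
theorem stmt1
    (a : ℝ → ℝ) (ha_cont : Continuous a) (ha_pos : ∀ x, 0 < a x)
    (H : ℝ → ℝ → ℝ) (hH_cont : Continuous (fun q : ℝ × ℝ => H q.1 q.2))
    (hH_coer : ∃ α β : ℝ → ℝ, Tendsto α atTop atTop ∧ Tendsto β atTop atTop ∧
      ∀ p x : ℝ, α |p| ≤ H p x ∧ H p x ≤ β |p|)
    (hH_lip : ∀ R > (0 : ℝ), ∃ C : ℝ, ∀ p ∈ Icc (-R) R, ∀ q ∈ Icc (-R) R, ∀ x : ℝ,
      |H p x - H q x| ≤ C * |p - q|)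
    (m M m' M' : ℝ → ℝ)
    (hm : ∀ x, HasDerivAt m (m' x) x) (hM : ∀ x, HasDerivAt M (M' x) x)
    (hm'c : Continuous m') (hM'c : Continuous M')
    (hmb : ∃ B, ∀ x, |m x| ≤ B) (hMb : ∃ B, ∀ x, |M x| ≤ B)
    (hmM : ∀ x, m x < M x)
    (hsub : ∀ x, a x * m' x + H (m x) x < 0)
    (hsup : ∀ x, 0 < a x * M' x + H (M x) x) :
    ∃ f f' : ℝ → ℝ, (∀ x, HasDerivAt f (f' x) x) ∧ Continuous f' ∧
      (∀ x, a x * f' x + H (f x) x = 0) ∧ ∀ x, m x < f x ∧ f x < M x :=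
  stmt1_general a ha_cont ha_pos H hH_cont hH_lip m M m' M' hm hM hmb hMb hmM hsub hsup
end

section
/- Let a : ℝ → ℝ be continuous with a(x) > 0 for all x, and let H : ℝ × ℝ → ℝ be continuous, coercive in p uniformly in x, and locally Lipschitz in p uniformly in x. Suppose m, M : ℝ → ℝ are bounded C¹ functions with m(x) < M(x) for all x, satisfying a(x)·m'(x) + H(m(x), x) > 0 > a(x)·M'(x) + H(M(x), x) for all x ∈ ℝ. Then there exists f ∈ C¹(ℝ) with a(x)·f'(x) + H(f(x), x) = 0 and m(x) < f(x) < M(x) for all x ∈ ℝ. -/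
/-!
Truncate the equation outside the strip between `m` and `M`: the field
`v x y = -H (max (m x) (min (M x) y)) x / a x` is bounded and Lipschitz in `y` on every time
strip, so each initial value `s` at time `0` has a global solution `γ s`, depending continuously
on `s`. A solution can cross `m` only downwards and `M` only upwards, so the initial values whose
solution leaves the strip in forward time below `m`, resp. above `M`, form disjoint open sets
containing `m 0`, resp. `M 0`. By connectedness of `[m 0, M 0]` some `s` lies in neither; its
solution stays strictly inside the strip at all times, where the truncation is inactive.
-/

open Set Filter Function

open scoped NNReal Topology

section Barrier

variable {f f' B B' : ℝ → ℝ}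

lemma exists_gt_lt_of_hasDerivAt_of_eq {x d d' : ℝ} (hf : HasDerivAt f d x)
    (hB : HasDerivAt B d' x) (heq : f x = B x) (hlt : d < d') : ∃ y > x, f y < B y := by
  have hslope := (hasDerivAt_iff_tendsto_slope.mp (hf.sub hB)).mono_left (nhdsGT_le_nhdsNE x)
  obtain ⟨y, hy, hxy⟩ :=
    ((hslope.eventually (eventually_lt_nhds (sub_neg.mpr hlt))).and self_mem_nhdsWithin).exists
  refine ⟨y, hxy, ?_⟩
  rw [slope_def_field, div_lt_iff₀ (sub_pos.mpr hxy), zero_mul] at hy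
  simp only [Pi.sub_apply, heq, sub_self, sub_zero, sub_neg] at hy
  exact hy

lemma le_of_le_of_deriv_lt_at_eq (hf : ∀ x, HasDerivAt f (f' x) x)
    (hB : ∀ x, HasDerivAt B (B' x) x) (hfB : ∀ x, f x = B x → f' x < B' x) {x y : ℝ}
    (hxy : x ≤ y) (hx : f x ≤ B x) : f y ≤ B y :=
  image_le_of_deriv_right_lt_deriv_boundary'
    (HasDerivAt.continuousOn fun t _ => hf t) (fun t _ => (hf t).hasDerivWithinAt) hx
    (HasDerivAt.continuousOn fun t _ => hB t) (fun t _ => (hB t).hasDerivWithinAt)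
    (fun t _ => hfB t) ⟨hxy, le_rfl⟩

lemma lt_of_forall_ge_le_of_deriv_lt_at_eq (hf : ∀ x, HasDerivAt f (f' x) x)
    (hB : ∀ x, HasDerivAt B (B' x) x) (hfB : ∀ x, f x = B x → f' x < B' x) {x₀ : ℝ}
    (h : ∀ y, x₀ ≤ y → B y ≤ f y) (x : ℝ) : B x < f x := by
  have hlt : B (max x x₀) < f (max x x₀) := by
    refine (h _ (le_max_right _ _)).lt_of_ne fun heq => ?_
    obtain ⟨z, hz, hfz⟩ :=
      exists_gt_lt_of_hasDerivAt_of_eq (hf _) (hB _) heq.symm (hfB _ heq.symm)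
    exact (h z ((le_max_right _ _).trans hz.le)).not_gt hfz
  by_contra! hx
  exact (le_of_le_of_deriv_lt_at_eq hf hB hfB (le_max_left x x₀) hx).not_gt hlt

end Barrier

section GlobalSolutions

variable {v : ℝ → ℝ → ℝ}

lemma exists_eq_forall_mem_Ioo_hasDerivAt (hcont : ∀ y, Continuous (v · y))
    (hlip : ∀ T, ∃ K, ∀ t ∈ Icc (-T) T, LipschitzWith K (v t))
    (hbdd : ∀ T, ∃ C, ∀ t ∈ Icc (-T) T, ∀ y, |v t y| ≤ C) (s : ℝ) {T : ℝ} (hT : 0 < T) :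
    ∃ γ : ℝ → ℝ, γ 0 = s ∧ ∀ t ∈ Ioo (-T) T, HasDerivAt γ (v t (γ t)) t := by
  obtain ⟨K, hK⟩ := hlip T
  obtain ⟨C, hC⟩ := hbdd T
  have hpl : IsPicardLindelof v (tmin := -T) (tmax := T) ⟨0, by constructor <;> linarith⟩ s
      (C.toNNReal * T.toNNReal) 0 C.toNNReal K :=
    { lipschitzOnWith := fun t ht => (hK t ht).lipschitzOnWith
      continuousOn := fun y _ => (hcont y).continuousOn
      norm_le := fun t ht y _ => (hC t ht y).trans (Real.le_coe_toNNReal C)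
      mul_max_le := by simp [Real.coe_toNNReal _ hT.le] }
  obtain ⟨γ, hγ0, hγ⟩ := hpl.exists_eq_forall_mem_Icc_hasDerivWithinAt₀
  exact ⟨γ, hγ0, fun t ht =>
    (hγ t (Ioo_subset_Icc_self ht)).hasDerivAt (Icc_mem_nhds ht.1 ht.2)⟩

theorem exists_isIntegralCurve_eq (hcont : ∀ y, Continuous (v · y))
    (hlip : ∀ T, ∃ K, ∀ t ∈ Icc (-T) T, LipschitzWith K (v t))
    (hbdd : ∀ T, ∃ C, ∀ t ∈ Icc (-T) T, ∀ y, |v t y| ≤ C) (s : ℝ) :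
    ∃ γ : ℝ → ℝ, γ 0 = s ∧ IsIntegralCurve γ v := by
  choose γ hγ0 hγ using fun n : ℕ =>
    exists_eq_forall_mem_Ioo_hasDerivAt hcont hlip hbdd s (Nat.cast_add_one_pos n)
  have hcons : ∀ {n k : ℕ}, n ≤ k → EqOn (γ n) (γ k) (Ioo (-(n + 1)) (n + 1)) := by
    intro n k hnk
    have hnk' : (n : ℝ) + 1 ≤ k + 1 := by exact_mod_cast Nat.succ_le_succ hnk
    obtain ⟨K, hK⟩ := hlip (n + 1)
    refine ODE_solution_unique_of_mem_Ioo (s := fun _ => univ)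
      (fun t ht => (hK t (Ioo_subset_Icc_self ht)).lipschitzOnWith)
      ⟨by linarith [n.cast_nonneg (α := ℝ)], by positivity⟩
      (fun t ht => ⟨hγ n t ht, mem_univ _⟩)
      (fun t ht => ⟨hγ k t (Ioo_subset_Ioo (neg_le_neg hnk') hnk' ht), mem_univ _⟩)
      ((hγ0 n).trans (hγ0 k).symm)
  have hloc : ∀ t, (fun u => γ ⌈|u|⌉₊ u) =ᶠ[𝓝 t] γ (⌈|t|⌉₊ + 1) := by
    intro t
    have ht : |t| < ⌈|t|⌉₊ + 1 := (Nat.le_ceil _).trans_lt (lt_add_one _)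
    filter_upwards [(continuous_abs.tendsto t).eventually (gt_mem_nhds ht)] with u hu
    exact hcons (Nat.ceil_le.mpr (by exact_mod_cast hu.le))
      (abs_lt.mp ((Nat.le_ceil _).trans_lt (lt_add_one _)))
  refine ⟨fun u => γ ⌈|u|⌉₊ u, by simpa using hγ0 0, fun t => ?_⟩
  have ht : |t| < ((⌈|t|⌉₊ + 1 : ℕ) : ℝ) + 1 := by
    push_cast; linarith [Nat.le_ceil |t|]
  have := (hγ _ t (abs_lt.mp ht)).congr_of_eventuallyEq (hloc t)
  rwa [← (hloc t).eq_of_nhds] at this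

lemma continuous_apply_of_isIntegralCurve
    (hlip : ∀ T, ∃ K, ∀ t ∈ Icc (-T) T, LipschitzWith K (v t)) {γ : ℝ → ℝ → ℝ}
    (hγ0 : ∀ s, γ s 0 = s) (hγ : ∀ s, IsIntegralCurve (γ s) v) {x : ℝ} (hx : 0 ≤ x) :
    Continuous fun s => γ s x := by
  obtain ⟨K, hK⟩ := hlip x
  refine LipschitzWith.continuous (K := ⟨Real.exp (K * x), (Real.exp_pos _).le⟩)
    (LipschitzWith.of_dist_le_mul fun s s' => ?_)
  have := dist_le_of_trajectories_ODE_of_mem (s := fun _ => univ) (K := K)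
    (fun t ht => (hK t ⟨by linarith [ht.1], ht.2.le⟩).lipschitzOnWith)
    (HasDerivAt.continuousOn fun t _ => hγ s t) (fun t _ => (hγ s t).hasDerivWithinAt)
    (fun _ _ => mem_univ _)
    (HasDerivAt.continuousOn fun t _ => hγ s' t) (fun t _ => (hγ s' t).hasDerivWithinAt)
    (fun _ _ => mem_univ _) (le_of_eq (by rw [hγ0, hγ0])) x ⟨hx, le_rfl⟩
  rwa [sub_zero, mul_comm] at this

end GlobalSolutions

theorem exists_forall_lt_and_lt_of_barriers {v : ℝ → ℝ → ℝ} {γ : ℝ → ℝ → ℝ}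
    (hγ0 : ∀ s, γ s 0 = s) (hγ : ∀ s, IsIntegralCurve (γ s) v)
    (hγc : ∀ x, 0 ≤ x → Continuous fun s => γ s x) {m M m' M' : ℝ → ℝ}
    (hm : ∀ x, HasDerivAt m (m' x) x) (hM : ∀ x, HasDerivAt M (M' x) x)
    (hmM : ∀ x, m x < M x) (hsub : ∀ x, v x (m x) < m' x) (hsup : ∀ x, M' x < v x (M x)) :
    ∃ s, ∀ x, m x < γ s x ∧ γ s x < M x := by
  have hγm : ∀ s x, γ s x = m x → v x (γ s x) < m' x := fun s x h => h ▸ hsub x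
  have hMγ : ∀ s x, M x = γ s x → M' x < v x (γ s x) := fun s x h => h ▸ hsup x
  set A := {s | ∃ x, 0 ≤ x ∧ γ s x < m x}
  set B := {s | ∃ x, 0 ≤ x ∧ M x < γ s x}
  have hA : IsOpen A := by
    rw [show A = ⋃ x ∈ Ici 0, {s | γ s x < m x} by ext; simp [A]]
    exact isOpen_biUnion fun x hx => isOpen_lt (hγc x hx) continuous_const
  have hB : IsOpen B := by
    rw [show B = ⋃ x ∈ Ici 0, {s | M x < γ s x} by ext; simp [B]]
    exact isOpen_biUnion fun x hx => isOpen_lt continuous_const (hγc x hx)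
  have hmA : m 0 ∈ A := by
    obtain ⟨x, hx, hlt⟩ := exists_gt_lt_of_hasDerivAt_of_eq (hγ (m 0) 0) (hm 0) (hγ0 _)
      (hγm _ _ (hγ0 _))
    exact ⟨x, hx.le, hlt⟩
  have hMB : M 0 ∈ B := by
    obtain ⟨x, hx, hlt⟩ := exists_gt_lt_of_hasDerivAt_of_eq (hM 0) (hγ (M 0) 0) (hγ0 _).symm
      (hMγ _ _ (hγ0 _).symm)
    exact ⟨x, hx.le, hlt⟩
  have hAB : ∀ s ∈ A, s ∉ B := by
    rintro s ⟨x₁, -, h₁⟩ ⟨x₂, -, h₂⟩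
    have hm₁ := le_of_le_of_deriv_lt_at_eq (hγ s) hm (hγm s) (le_max_left x₁ x₂) h₁.le
    have hM₂ := le_of_le_of_deriv_lt_at_eq hM (hγ s) (hMγ s) (le_max_right x₁ x₂) h₂.le
    exact (hmM _).not_ge (hM₂.trans hm₁)
  obtain ⟨s, -, hs⟩ : ∃ s ∈ Icc (m 0) (M 0), s ∉ A ∪ B := by
    by_contra! hcover
    obtain ⟨s, -, hsA, hsB⟩ := isPreconnected_Icc A B hA hB hcover
      ⟨m 0, left_mem_Icc.mpr (hmM 0).le, hmA⟩ ⟨M 0, right_mem_Icc.mpr (hmM 0).le, hMB⟩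
    exact hAB s hsA hsB
  refine ⟨s, fun x => ⟨?_, ?_⟩⟩
  · refine lt_of_forall_ge_le_of_deriv_lt_at_eq (hγ s) hm (hγm s) (x₀ := 0) (fun y hy => ?_) x
    exact not_lt.mp fun h => hs (Or.inl ⟨y, hy, h⟩)
  · refine lt_of_forall_ge_le_of_deriv_lt_at_eq hM (hγ s) (hMγ s) (x₀ := 0) (fun y hy => ?_) x
    exact not_lt.mp fun h => hs (Or.inr ⟨y, hy, h⟩)

section Truncation

variable {m M : ℝ → ℝ} {F : ℝ → ℝ → ℝ}

def truncateBetween (m M : ℝ → ℝ) (F : ℝ → ℝ → ℝ) (t y : ℝ) : ℝ :=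
  F t (max (m t) (min (M t) y))

lemma truncateBetween_of_mem {t y : ℝ} (hy : y ∈ Icc (m t) (M t)) :
    truncateBetween m M F t y = F t y := by
  rw [truncateBetween, min_eq_right hy.2, max_eq_right hy.1]

lemma continuous_truncateBetween (hm : Continuous m) (hM : Continuous M)
    (hF : Continuous (uncurry F)) : Continuous (uncurry (truncateBetween m M F)) :=
  hF.comp (continuous_fst.prodMk
    ((hm.comp continuous_fst).max ((hM.comp continuous_fst).min continuous_snd)))

lemma exists_forall_max_min_mem_Icc (hm : Continuous m) (hM : Continuous M) (T : ℝ) :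
    ∃ R, ∀ t ∈ Icc (-T) T, ∀ y, max (m t) (min (M t) y) ∈ Icc (-R) R := by
  obtain ⟨Rm, hRm⟩ := (isCompact_Icc (a := -T) (b := T)).exists_bound_of_continuousOn
    hm.continuousOn
  obtain ⟨RM, hRM⟩ := (isCompact_Icc (a := -T) (b := T)).exists_bound_of_continuousOn
    hM.continuousOn
  refine ⟨max Rm RM, fun t ht y => ?_⟩
  have hmt := abs_le.mp ((Real.norm_eq_abs _ ▸ hRm t ht).trans (le_max_left Rm RM))
  have hMt := abs_le.mp ((Real.norm_eq_abs _ ▸ hRM t ht).trans (le_max_right Rm RM))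
  exact ⟨hmt.1.trans (le_max_left _ _), max_le hmt.2 ((min_le_left _ _).trans hMt.2)⟩

lemma exists_bound_truncateBetween (hm : Continuous m) (hM : Continuous M)
    (hF : Continuous (uncurry F)) (T : ℝ) :
    ∃ C, ∀ t ∈ Icc (-T) T, ∀ y, |truncateBetween m M F t y| ≤ C := by
  obtain ⟨R, hR⟩ := exists_forall_max_min_mem_Icc hm hM T
  obtain ⟨C, hC⟩ := (isCompact_Icc.prod isCompact_Icc).exists_bound_of_continuousOn
    hF.continuousOn (s := Icc (-T) T ×ˢ Icc (-R) R)
  exact ⟨C, fun t ht y => hC (t, _) ⟨ht, hR t ht y⟩⟩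

lemma exists_lipschitzWith_truncateBetween (hm : Continuous m) (hM : Continuous M)
    (hF : ∀ T R, ∃ K, ∀ t ∈ Icc (-T) T, LipschitzOnWith K (F t) (Icc (-R) R)) (T : ℝ) :
    ∃ K, ∀ t ∈ Icc (-T) T, LipschitzWith K (truncateBetween m M F t) := by
  obtain ⟨R, hR⟩ := exists_forall_max_min_mem_Icc hm hM T
  obtain ⟨K, hK⟩ := hF T R
  refine ⟨K, fun t ht => ?_⟩
  have hclamp : LipschitzWith 1 fun y => max (m t) (min (M t) y) :=
    (LipschitzWith.id.const_min _).const_max _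
  have := lipschitzOnWith_univ.mp
    ((hK t ht).comp hclamp.lipschitzOnWith (s := univ) fun y _ => hR t ht y)
  rwa [mul_one] at this

end Truncation

lemma exists_lipschitzOnWith_neg_div {a : ℝ → ℝ} {H : ℝ → ℝ → ℝ} (ha_cont : Continuous a)
    (ha : ∀ x, a x ≠ 0)
    (hH_lip : ∀ R > (0 : ℝ), ∃ C : ℝ, ∀ p ∈ Icc (-R) R, ∀ q ∈ Icc (-R) R, ∀ x : ℝ,
      |H p x - H q x| ≤ C * |p - q|) (T R : ℝ) :
    ∃ K, ∀ t ∈ Icc (-T) T, LipschitzOnWith K (fun y => -H y t / a t) (Icc (-R) R) := by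
  obtain ⟨D, hD⟩ := isCompact_Icc.exists_bound_of_continuousOn
    (ha_cont.inv₀ ha).continuousOn (s := Icc (-T) T)
  obtain ⟨C, hC⟩ := hH_lip (max R 1) (by positivity)
  have hR : Icc (-R) R ⊆ Icc (-max R 1) (max R 1) :=
    Icc_subset_Icc (neg_le_neg (le_max_left R 1)) (le_max_left R 1)
  refine ⟨(D * C).toNNReal, fun t ht => LipschitzOnWith.of_dist_le_mul fun y hy y' hy' => ?_⟩
  have haD : |(a t)⁻¹| ≤ D := Real.norm_eq_abs _ ▸ hD t ht
  calc dist (-H y t / a t) (-H y' t / a t) = |(a t)⁻¹| * |H y t - H y' t| := by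
        rw [Real.dist_eq, abs_sub_comm (H y t), ← abs_mul]
        ring_nf
    _ ≤ D * (C * dist y y') :=
        mul_le_mul haD (hC y (hR hy) y' (hR hy') t) (abs_nonneg _) ((abs_nonneg _).trans haD)
    _ ≤ (D * C).toNNReal * dist y y' := by
        rw [← mul_assoc]
        exact mul_le_mul_of_nonneg_right (Real.le_coe_toNNReal _) dist_nonneg

theorem stmt2_general
    (a : ℝ → ℝ) (ha_cont : Continuous a) (ha_pos : ∀ x, 0 < a x)
    (H : ℝ → ℝ → ℝ) (hH_cont : Continuous (fun q : ℝ × ℝ => H q.1 q.2))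
    (hH_lip : ∀ R > (0 : ℝ), ∃ C : ℝ, ∀ p ∈ Icc (-R) R, ∀ q ∈ Icc (-R) R, ∀ x : ℝ,
      |H p x - H q x| ≤ C * |p - q|)
    (m M m' M' : ℝ → ℝ)
    (hm : ∀ x, HasDerivAt m (m' x) x) (hM : ∀ x, HasDerivAt M (M' x) x)
    (hmM : ∀ x, m x < M x)
    (hsub : ∀ x, 0 < a x * m' x + H (m x) x)
    (hsup : ∀ x, a x * M' x + H (M x) x < 0) :
    ∃ f f' : ℝ → ℝ, (∀ x, HasDerivAt f (f' x) x) ∧ Continuous f' ∧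
      (∀ x, a x * f' x + H (f x) x = 0) ∧ ∀ x, m x < f x ∧ f x < M x := by
  set F : ℝ → ℝ → ℝ := fun t y => -H y t / a t
  have hF : Continuous (uncurry F) :=
    (hH_cont.comp continuous_swap).neg.div (ha_cont.comp continuous_fst)
      fun q => (ha_pos q.1).ne'
  have hmc : Continuous m := continuous_iff_continuousAt.mpr fun x => (hm x).continuousAt
  have hMc : Continuous M := continuous_iff_continuousAt.mpr fun x => (hM x).continuousAt
  have hv := continuous_truncateBetween hmc hMc hF
  have hlip := exists_lipschitzWith_truncateBetween hmc hMc
    (exists_lipschitzOnWith_neg_div ha_cont (fun x => (ha_pos x).ne') hH_lip)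
  choose γ hγ0 hγ using exists_isIntegralCurve_eq (fun y => hv.uncurry_right y) hlip
    (exists_bound_truncateBetween hmc hMc hF)
  obtain ⟨s, hs⟩ := exists_forall_lt_and_lt_of_barriers hγ0 hγ
    (fun x => continuous_apply_of_isIntegralCurve hlip hγ0 hγ) hm hM hmM
    (fun x => by
      rw [truncateBetween_of_mem (left_mem_Icc.mpr (hmM x).le), div_lt_iff₀ (ha_pos x)]
      linarith [hsub x])
    (fun x => by
      rw [truncateBetween_of_mem (right_mem_Icc.mpr (hmM x).le), lt_div_iff₀ (ha_pos x)]
      linarith [hsup x])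
  have hsol : ∀ x, truncateBetween m M F x (γ s x) = F x (γ s x) := fun x =>
    truncateBetween_of_mem ⟨(hs x).1.le, (hs x).2.le⟩
  refine ⟨γ s, fun x => F x (γ s x), fun x => by simpa only [hsol] using hγ s x,
    hF.comp (continuous_id.prodMk (hγ s).continuous), fun x => ?_, hs⟩
  simp only [F]
  field_simp [(ha_pos x).ne']
  ring

/-- Lemma A.7, second alternative: a C¹ solution can be inserted between a strict
subsolution `m` and a strict supersolution `M` of the first-order ODE. -/
theorem stmt2
    (a : ℝ → ℝ) (ha_cont : Continuous a) (ha_pos : ∀ x, 0 < a x)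
    (H : ℝ → ℝ → ℝ) (hH_cont : Continuous (fun q : ℝ × ℝ => H q.1 q.2))
    (hH_coer : ∃ α β : ℝ → ℝ, Tendsto α atTop atTop ∧ Tendsto β atTop atTop ∧
      ∀ p x : ℝ, α |p| ≤ H p x ∧ H p x ≤ β |p|)
    (hH_lip : ∀ R > (0 : ℝ), ∃ C : ℝ, ∀ p ∈ Icc (-R) R, ∀ q ∈ Icc (-R) R, ∀ x : ℝ,
      |H p x - H q x| ≤ C * |p - q|)
    (m M m' M' : ℝ → ℝ)
    (hm : ∀ x, HasDerivAt m (m' x) x) (hM : ∀ x, HasDerivAt M (M' x) x)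
    (hm'c : Continuous m') (hM'c : Continuous M')
    (hmb : ∃ B, ∀ x, |m x| ≤ B) (hMb : ∃ B, ∀ x, |M x| ≤ B)
    (hmM : ∀ x, m x < M x)
    (hsub : ∀ x, 0 < a x * m' x + H (m x) x)
    (hsup : ∀ x, a x * M' x + H (M x) x < 0) :
    ∃ f f' : ℝ → ℝ, (∀ x, HasDerivAt f (f' x) x) ∧ Continuous f' ∧
      (∀ x, a x * f' x + H (f x) x = 0) ∧ ∀ x, m x < f x ∧ f x < M x :=
  stmt2_general a ha_cont ha_pos H hH_cont hH_lip m M m' M' hm hM hmM hsub hsup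
end

section
/- Let a : ℝ → ℝ be continuous with a(x) > 0 for all x, let H : ℝ × ℝ → ℝ be continuous and locally Lipschitz in p uniformly in x, and fix λ ∈ ℝ. Let 𝒮_λ be a nonempty family of C¹ solutions of a(x)·u'(x) + H(u(x), x) = λ on ℝ. If 𝒮_λ is compact in C(ℝ) (with the topology of locally uniform convergence), then the pointwise infimum u̲(x) := inf_{u ∈ 𝒮_λ} u(x) and the pointwise supremum ū(x) := sup_{u ∈ 𝒮_λ} u(x) both belong to 𝒮_λ. -/
/-!
Since `a > 0`, the equation can be solved for the derivative, `u' = (λ - H(u, x)) / a(x)`, and on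
a compact time interval the right-hand side is Lipschitz in `u` on bounded sets. By uniqueness for
the initial-value problem, two distinct solutions never meet, so by the intermediate value theorem
the solutions are totally ordered by their values at `0`. Evaluation at `0` is continuous on
`C(ℝ, ℝ)`, so it attains its minimum and maximum on the compact family, and the solutions attaining
them lie below, resp. above, every other solution everywhere.
-/

open Set

theorem IsCompact.exists_pos_mapsTo_Icc {K : Set ℝ} (hK : IsCompact K) {f : ℝ → ℝ}
    (hf : ContinuousOn f K) : ∃ R > 0, MapsTo f K (Icc (-R) R) := by
  obtain ⟨R, hR⟩ := hK.exists_bound_of_continuousOn hf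
  refine ⟨max R 1, by positivity, fun t ht => abs_le.mp ?_⟩
  exact (hR t ht).trans (le_max_left _ _)

theorem lipschitzOnWith_div_of_abs_sub_le {g : ℝ → ℝ} {s : Set ℝ} {C m α : ℝ} (lam : ℝ)
    (hm : 0 < m) (hmα : m ≤ α) (hg : ∀ p ∈ s, ∀ q ∈ s, |g p - g q| ≤ C * |p - q|) :
    LipschitzOnWith (C / m).toNNReal (fun p => (lam - g p) / α) s := by
  refine LipschitzOnWith.of_dist_le' fun p hp q hq => ?_
  have hpq := hg p hp q hq
  rw [Real.dist_eq, Real.dist_eq, ← sub_div, abs_div, abs_of_pos (hm.trans_le hmα),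
    sub_sub_sub_cancel_left, abs_sub_comm]
  calc |g p - g q| / α ≤ C * |p - q| / α := div_le_div_of_nonneg_right hpq (hm.trans_le hmα).le
    _ ≤ C * |p - q| / m := div_le_div_of_nonneg_left ((abs_nonneg _).trans hpq) hm hmα
    _ = C / m * |p - q| := by ring

theorem hasDerivAt_div_of_mul_add_eq {u : ℝ → ℝ} {u' x α β lam : ℝ} (hu : HasDerivAt u u' x)
    (hα : α ≠ 0) (heq : α * u' + β = lam) : HasDerivAt u ((lam - β) / α) x := by
  convert hu using 1
  rw [div_eq_iff hα]
  linarith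

section ODE

variable {a : ℝ → ℝ} {H : ℝ → ℝ → ℝ} {lam : ℝ} {u v u' v' : ℝ → ℝ}

theorem ode_solution_unique (ha_cont : Continuous a) (ha_pos : ∀ x, 0 < a x)
    (hH_lip : ∀ R > (0 : ℝ), ∃ C : ℝ, ∀ p ∈ Icc (-R) R, ∀ q ∈ Icc (-R) R, ∀ x : ℝ,
      |H p x - H q x| ≤ C * |p - q|)
    (hu : ∀ x, HasDerivAt u (u' x) x) (hueq : ∀ x, a x * u' x + H (u x) x = lam)
    (hv : ∀ x, HasDerivAt v (v' x) x) (hveq : ∀ x, a x * v' x + H (v x) x = lam)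
    {c : ℝ} (hc : u c = v c) : u = v := by
  funext x
  set r := |x - c| + 1
  have hr_pos : 0 < r := by positivity
  have hK : IsCompact (Icc (c - r) (c + r)) := isCompact_Icc
  obtain ⟨Ru, hRu_pos, hRu⟩ :=
    hK.exists_pos_mapsTo_Icc (HasDerivAt.continuousOn fun t _ => hu t)
  obtain ⟨Rv, -, hRv⟩ := hK.exists_pos_mapsTo_Icc (HasDerivAt.continuousOn fun t _ => hv t)
  set R := max Ru Rv
  have hRu_le : Icc (-Ru) Ru ⊆ Icc (-R) R :=
    Icc_subset_Icc (neg_le_neg (le_max_left _ _)) (le_max_left _ _)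
  have hRv_le : Icc (-Rv) Rv ⊆ Icc (-R) R :=
    Icc_subset_Icc (neg_le_neg (le_max_right _ _)) (le_max_right _ _)
  obtain ⟨C, hC⟩ := hH_lip R (lt_max_of_lt_left hRu_pos)
  obtain ⟨t₀, -, ha_min⟩ :=
    hK.exists_isMinOn (nonempty_Icc.2 (by linarith)) ha_cont.continuousOn
  have hr : ∀ {t}, |t - c| < r → t ∈ Ioo (c - r) (c + r) := fun ht => by
    rw [abs_sub_lt_iff] at ht; constructor <;> linarith
  refine ODE_solution_unique_of_mem_Ioo (s := fun _ => Icc (-R) R)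
    (fun t ht => lipschitzOnWith_div_of_abs_sub_le lam (ha_pos t₀)
      (ha_min (Ioo_subset_Icc_self ht)) fun p hp q hq => hC p hp q hq t)
    (hr (by simpa using hr_pos))
    (fun t ht => ⟨hasDerivAt_div_of_mul_add_eq (hu t) (ha_pos t).ne' (hueq t),
      hRu_le (hRu (Ioo_subset_Icc_self ht))⟩)
    (fun t ht => ⟨hasDerivAt_div_of_mul_add_eq (hv t) (ha_pos t).ne' (hveq t),
      hRv_le (hRv (Ioo_subset_Icc_self ht))⟩) hc (hr (lt_add_one _))

theorem ode_solution_le_of_le (ha_cont : Continuous a) (ha_pos : ∀ x, 0 < a x)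
    (hH_lip : ∀ R > (0 : ℝ), ∃ C : ℝ, ∀ p ∈ Icc (-R) R, ∀ q ∈ Icc (-R) R, ∀ x : ℝ,
      |H p x - H q x| ≤ C * |p - q|)
    (hu : ∀ x, HasDerivAt u (u' x) x) (hueq : ∀ x, a x * u' x + H (u x) x = lam)
    (hv : ∀ x, HasDerivAt v (v' x) x) (hveq : ∀ x, a x * v' x + H (v x) x = lam)
    {x₀ : ℝ} (h₀ : u x₀ ≤ v x₀) : u ≤ v := by
  intro x
  by_contra! hx
  have hcont : Continuous (u - v) :=
    continuous_iff_continuousAt.2 fun t => ((hu t).sub (hv t)).continuousAt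
  obtain ⟨c, -, hc⟩ := intermediate_value_uIcc hcont.continuousOn
    (mem_uIcc.2 (Or.inl ⟨sub_nonpos.2 h₀, (sub_pos.2 hx).le⟩))
  have huv := ode_solution_unique ha_cont ha_pos hH_lip hu hueq hv hveq (sub_eq_zero.1 hc)
  exact hx.ne (congrFun huv x).symm

end ODE

theorem stmt3_general
    (a : ℝ → ℝ) (ha_cont : Continuous a) (ha_pos : ∀ x, 0 < a x)
    (H : ℝ → ℝ → ℝ)
    (hH_lip : ∀ R > (0 : ℝ), ∃ C : ℝ, ∀ p ∈ Icc (-R) R, ∀ q ∈ Icc (-R) R, ∀ x : ℝ,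
      |H p x - H q x| ≤ C * |p - q|)
    (lam : ℝ) (S : Set C(ℝ, ℝ)) (hne : S.Nonempty) (hcomp : IsCompact S)
    (hsol : ∀ u ∈ S, ∃ u' : ℝ → ℝ, (∀ x, HasDerivAt (u : ℝ → ℝ) (u' x) x) ∧
      Continuous u' ∧ ∀ x, a x * u' x + H (u x) x = lam) :
    (∃ u ∈ S, ∀ x : ℝ, u x = ⨅ v : S, (v : C(ℝ, ℝ)) x) ∧
    (∃ u ∈ S, ∀ x : ℝ, u x = ⨆ v : S, (v : C(ℝ, ℝ)) x) := by
  have hle : ∀ u ∈ S, ∀ v ∈ S, u 0 ≤ v 0 → ∀ x, u x ≤ v x := fun u hu v hv h₀ => by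
    obtain ⟨u', hu', -, hueq⟩ := hsol u hu
    obtain ⟨v', hv', -, hveq⟩ := hsol v hv
    exact ode_solution_le_of_le ha_cont ha_pos hH_lip hu' hueq hv' hveq h₀
  have : Nonempty S := hne.to_subtype
  have heval : ContinuousOn (fun f : C(ℝ, ℝ) => f 0) S := (continuous_eval_const 0).continuousOn
  obtain ⟨u, hu, hmin⟩ := hcomp.exists_isMinOn hne heval
  obtain ⟨w, hw, hmax⟩ := hcomp.exists_isMaxOn hne heval
  refine ⟨⟨u, hu, fun x => ?_⟩, ⟨w, hw, fun x => ?_⟩⟩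
  · exact (ciInf_eq_of_forall_ge_of_forall_gt_exists_lt
      (fun v : S => hle u hu v v.prop (hmin v.prop) x) fun _ h => ⟨(⟨u, hu⟩ : S), h⟩).symm
  · exact (ciSup_eq_of_forall_le_of_forall_lt_exists_gt
      (fun v : S => hle v v.prop w hw (hmax v.prop) x) fun _ h => ⟨(⟨w, hw⟩ : S), h⟩).symm

/-- Lemma A.9: a nonempty compact (in C(ℝ)) family of C¹ solutions of the ODE
`a u' + H(u,·) = λ` contains its pointwise infimum and its pointwise supremum. -/
theorem stmt3
    (a : ℝ → ℝ) (ha_cont : Continuous a) (ha_pos : ∀ x, 0 < a x)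
    (H : ℝ → ℝ → ℝ) (hH_cont : Continuous (fun q : ℝ × ℝ => H q.1 q.2))
    (hH_lip : ∀ R > (0 : ℝ), ∃ C : ℝ, ∀ p ∈ Icc (-R) R, ∀ q ∈ Icc (-R) R, ∀ x : ℝ,
      |H p x - H q x| ≤ C * |p - q|)
    (lam : ℝ) (S : Set C(ℝ, ℝ)) (hne : S.Nonempty) (hcomp : IsCompact S)
    (hsol : ∀ u ∈ S, ∃ u' : ℝ → ℝ, (∀ x, HasDerivAt (u : ℝ → ℝ) (u' x) x) ∧
      Continuous u' ∧ ∀ x, a x * u' x + H (u x) x = lam) :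
    (∃ u ∈ S, ∀ x : ℝ, u x = ⨅ v : S, (v : C(ℝ, ℝ)) x) ∧
    (∃ u ∈ S, ∀ x : ℝ, u x = ⨆ v : S, (v : C(ℝ, ℝ)) x) :=
  stmt3_general a ha_cont ha_pos H hH_lip lam S hne hcomp hsol
end

section
/- Let G : ℝ → [0, ∞) be continuous with G(0) = 0, G(p) > 0 for p ≠ 0, G coercive (G(p) → +∞ as |p| → +∞), and suppose the restriction G₂ of G to [0, ∞) has finitely many local extrema at 0 < p₁ < … < p_{2N}, where M := max of the local maxima values M_i = G(p_{2i-1}) and m := min of the local minima values m_j = G(p_{2j}). Define the right inverses G̲₂⁻¹(λ) := min{p ≥ 0 : G(p) = λ} and Ḡ₂⁻¹(λ) := max{p ≥ 0 : G(p) = λ} for λ ≥ 0. If β > M - m, then for every λ ≥ β one has Ḡ₂⁻¹(λ - β) < G̲₂⁻¹(λ). -/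
/-!
On `[0,∞)`, `G` takes values below `m` only on the first increasing branch `[0, p 1)`, and
values above `M` only on the last increasing branch `(p (2N), ∞)`. Since `β > M - m`, every
`λ ≥ β` has `λ - β < m` or `λ > M`. In the first case every preimage of `λ - β` lies in
`[0, p 1)`, in the second every preimage of `λ` lies in `(p (2N), ∞)`; either way the two
extreme preimages are separated by that branch or both lie on it, where `G` is strictly
increasing and `G` is smaller at the first one.
-/

open Set Filter

lemma mapsTo_Icc_of_piecewise_monotoneOn {α β : Type*} [LinearOrder α] [Preorder β]
    {f : α → β} {s : Set β} [hs : s.OrdConnected] {p : ℕ → α} {k n : ℕ} (hkn : k ≤ n)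
    (hf : ∀ i, k ≤ i → i < n →
      MonotoneOn f (Icc (p i) (p (i + 1))) ∨ AntitoneOn f (Icc (p i) (p (i + 1))))
    (hfp : ∀ i, k ≤ i → i ≤ n → f (p i) ∈ s) :
    MapsTo f (Icc (p k) (p n)) s := by
  induction n, hkn using Nat.le_induction with
  | base => simpa [Icc_self] using hfp k le_rfl le_rfl
  | succ n hkn ih =>
    intro q ⟨hkq, hqn⟩
    rcases le_or_gt q (p n) with hq | hq
    · exact ih (fun i hki hin => hf i hki (by omega)) (fun i hki hin => hfp i hki (by omega))
        ⟨hkq, hq⟩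
    have hl := hfp n hkn (by omega)
    have hr := hfp (n + 1) (by omega) le_rfl
    rcases hf n hkn (by omega) with hmono | hanti
    · exact (hmono.mapsTo_Icc.mono_right (hs.out hl hr)) ⟨hq.le, hqn⟩
    · exact (hanti.mapsTo_Icc.mono_right (hs.out hr hl)) ⟨hq.le, hqn⟩

section LevelSet

variable {G : ℝ → ℝ} {c : ℝ}

lemma levelSet_nonempty (hGc : Continuous G) (hG0 : G 0 = 0)
    (hG : Tendsto G atTop atTop) (hc : 0 ≤ c) :
    {q : ℝ | 0 ≤ q ∧ G q = c}.Nonempty := by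
  obtain ⟨R, hRc, hR0⟩ := ((hG.eventually_ge_atTop c).and (eventually_ge_atTop 0)).exists
  obtain ⟨q, hq, hqc⟩ := intermediate_value_Icc hR0 hGc.continuousOn ⟨by rwa [hG0], hRc⟩
  exact ⟨q, hq.1, hqc⟩

lemma levelSet_bddAbove (hG : Tendsto G atTop atTop) :
    BddAbove {q : ℝ | 0 ≤ q ∧ G q = c} := by
  obtain ⟨R, hR⟩ := (hG.eventually_gt_atTop c).exists_forall_of_atTop
  exact ⟨R, fun q ⟨_, hq⟩ => not_lt.1 fun hRq => (hR q hRq.le).ne' hq⟩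

lemma isClosed_levelSet (hGc : Continuous G) : IsClosed {q : ℝ | 0 ≤ q ∧ G q = c} :=
  isClosed_Ici.inter (isClosed_eq hGc continuous_const)

lemma csSup_levelSet_mem (hGc : Continuous G) (hG0 : G 0 = 0)
    (hG : Tendsto G atTop atTop) (hc : 0 ≤ c) :
    sSup {q : ℝ | 0 ≤ q ∧ G q = c} ∈ {q : ℝ | 0 ≤ q ∧ G q = c} :=
  (isClosed_levelSet hGc).csSup_mem (levelSet_nonempty hGc hG0 hG hc) (levelSet_bddAbove hG)

lemma csInf_levelSet_mem (hGc : Continuous G) (hG0 : G 0 = 0)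
    (hG : Tendsto G atTop atTop) (hc : 0 ≤ c) :
    sInf {q : ℝ | 0 ≤ q ∧ G q = c} ∈ {q : ℝ | 0 ≤ q ∧ G q = c} :=
  (isClosed_levelSet hGc).csInf_mem (levelSet_nonempty hGc hG0 hG hc) ⟨0, fun _ hq => hq.1⟩

end LevelSet

section Extrema

variable {G : ℝ → ℝ} {N : ℕ} {p : ℕ → ℝ}

lemma monotoneOn_or_antitoneOn_Icc
    (hinc : ∀ i < 2 * N, i % 2 = 0 → StrictMonoOn G (Icc (p i) (p (i + 1))))
    (hdec : ∀ i < 2 * N, i % 2 = 1 → StrictAntiOn G (Icc (p i) (p (i + 1))))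
    {i : ℕ} (hi : i < 2 * N) :
    MonotoneOn G (Icc (p i) (p (i + 1))) ∨ AntitoneOn G (Icc (p i) (p (i + 1))) := by
  rcases Nat.mod_two_eq_zero_or_one i with h | h
  · exact .inl (hinc i hi h).monotoneOn
  · exact .inr (hdec i hi h).antitoneOn

lemma map_le_of_extrema (hN : 1 ≤ N) (hpmono : ∀ i < 2 * N, p i < p (i + 1))
    (hinc : ∀ i < 2 * N, i % 2 = 0 → StrictMonoOn G (Icc (p i) (p (i + 1))))
    (hdec : ∀ i < 2 * N, i % 2 = 1 → StrictAntiOn G (Icc (p i) (p (i + 1))))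
    {M : ℝ} (hM : ∀ j < N, G (p (2 * j + 1)) ≤ M) {i : ℕ} (hi : i ≤ 2 * N) :
    G (p i) ≤ M := by
  obtain ⟨j, rfl | rfl⟩ := Nat.even_or_odd' i
  · rcases lt_or_ge j N with hj | hj
    · have h := (hpmono (2 * j) (by omega)).le
      exact ((hinc (2 * j) (by omega) (by omega)).monotoneOn
        (left_mem_Icc.2 h) (right_mem_Icc.2 h) h).trans (hM j hj)
    · have h := (hpmono (2 * (N - 1) + 1) (by omega)).le
      rw [show 2 * j = 2 * (N - 1) + 1 + 1 by omega]
      exact ((hdec (2 * (N - 1) + 1) (by omega) (by omega)).antitoneOn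
        (left_mem_Icc.2 h) (right_mem_Icc.2 h) h).trans (hM (N - 1) (by omega))
  · exact hM j (by omega)

lemma le_map_of_extrema (hpmono : ∀ i < 2 * N, p i < p (i + 1))
    (hdec : ∀ i < 2 * N, i % 2 = 1 → StrictAntiOn G (Icc (p i) (p (i + 1))))
    {m : ℝ} (hm : ∀ j < N, m ≤ G (p (2 * j + 2))) {i : ℕ} (hi1 : 1 ≤ i)
    (hi : i ≤ 2 * N) : m ≤ G (p i) := by
  obtain ⟨j, rfl | rfl⟩ := Nat.even_or_odd' i
  · obtain ⟨j, rfl⟩ : ∃ j', j = j' + 1 := ⟨j - 1, by omega⟩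
    exact hm j (by omega)
  · have h := (hpmono (2 * j + 1) (by omega)).le
    exact (hm j (by omega)).trans ((hdec (2 * j + 1) (by omega) (by omega)).antitoneOn
      (left_mem_Icc.2 h) (right_mem_Icc.2 h) h)

lemma mapsTo_Icc_Iic_of_extrema (hN : 1 ≤ N) (hp0 : p 0 = 0)
    (hpmono : ∀ i < 2 * N, p i < p (i + 1))
    (hinc : ∀ i < 2 * N, i % 2 = 0 → StrictMonoOn G (Icc (p i) (p (i + 1))))
    (hdec : ∀ i < 2 * N, i % 2 = 1 → StrictAntiOn G (Icc (p i) (p (i + 1))))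
    {M : ℝ} (hM : ∀ j < N, G (p (2 * j + 1)) ≤ M) :
    MapsTo G (Icc 0 (p (2 * N))) (Iic M) := by
  rw [← hp0]
  exact mapsTo_Icc_of_piecewise_monotoneOn (Nat.zero_le _)
    (fun _ _ hi => monotoneOn_or_antitoneOn_Icc hinc hdec hi)
    (fun _ _ hi => map_le_of_extrema hN hpmono hinc hdec hM hi)

lemma mapsTo_Ici_Ici_of_extrema (hN : 1 ≤ N) (hpmono : ∀ i < 2 * N, p i < p (i + 1))
    (hinc : ∀ i < 2 * N, i % 2 = 0 → StrictMonoOn G (Icc (p i) (p (i + 1))))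
    (hdec : ∀ i < 2 * N, i % 2 = 1 → StrictAntiOn G (Icc (p i) (p (i + 1))))
    (hlast : StrictMonoOn G (Ici (p (2 * N))))
    {m : ℝ} (hm : ∀ j < N, m ≤ G (p (2 * j + 2))) :
    MapsTo G (Ici (p 1)) (Ici m) := by
  intro q hq
  rcases le_or_gt q (p (2 * N)) with hqN | hqN
  · exact mapsTo_Icc_of_piecewise_monotoneOn (s := Ici m) (p := p) (k := 1) (n := 2 * N) (by omega)
      (fun _ _ hi => monotoneOn_or_antitoneOn_Icc hinc hdec hi)
      (fun _ hi1 hi => le_map_of_extrema hpmono hdec hm hi1 hi) ⟨hq, hqN⟩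
  · exact (le_map_of_extrema hpmono hdec hm (by omega) le_rfl).trans
      (hlast.monotoneOn self_mem_Ici (mem_Ici.2 hqN.le) hqN.le)

end Extrema

theorem stmt7_general
    (G : ℝ → ℝ) (hGc : Continuous G)
    (hG0 : G 0 = 0)
    (hcoer_top : Tendsto G atTop atTop)
    (N : ℕ) (hN : 1 ≤ N) (p : ℕ → ℝ)
    (hp0 : p 0 = 0) (hpmono : ∀ i < 2 * N, p i < p (i + 1))
    (hinc : ∀ i < 2 * N, i % 2 = 0 → StrictMonoOn G (Icc (p i) (p (i + 1))))
    (hdec : ∀ i < 2 * N, i % 2 = 1 → StrictAntiOn G (Icc (p i) (p (i + 1))))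
    (hlast : StrictMonoOn G (Ici (p (2 * N))))
    (M m : ℝ)
    (hM : IsGreatest ((fun j => G (p (2 * j + 1))) '' {j : ℕ | j < N}) M)
    (hm : IsLeast ((fun j => G (p (2 * j + 2))) '' {j : ℕ | j < N}) m)
    (β : ℝ) (hβ : M - m < β) :
    ∀ lam : ℝ, β ≤ lam →
      sSup {q : ℝ | 0 ≤ q ∧ G q = lam - β} < sInf {q : ℝ | 0 ≤ q ∧ G q = lam} := by
  intro lam hlam
  obtain ⟨ha0, haG⟩ := csSup_levelSet_mem hGc hG0 hcoer_top (c := lam - β) (by linarith)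
  have hGm := mapsTo_Ici_Ici_of_extrema hN hpmono hinc hdec hlast
    (fun j hj => hm.2 ⟨j, hj, rfl⟩)
  have hGM := mapsTo_Icc_Iic_of_extrema hN hp0 hpmono hinc hdec
    (fun j hj => hM.2 ⟨j, hj, rfl⟩)
  have hmM : m ≤ M := (hGm self_mem_Ici).trans (hM.2 ⟨0, hN, rfl⟩)
  obtain ⟨hb0, hbG⟩ := csInf_levelSet_mem hGc hG0 hcoer_top (c := lam) (by linarith)
  set a := sSup {q : ℝ | 0 ≤ q ∧ G q = lam - β}
  set b := sInf {q : ℝ | 0 ≤ q ∧ G q = lam}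
  have hGab : G a < G b := by linarith
  rcases lt_or_ge (lam - β) m with hlow | hhigh
  · have hap1 : a < p 1 := by
      by_contra! h
      linarith [mem_Ici.1 (hGm h)]
    refine (lt_or_ge b (p 1)).elim (fun hbp1 => ?_) hap1.trans_le
    have hfirst := hinc 0 (by omega) rfl
    rw [hp0] at hfirst
    exact (hfirst.lt_iff_lt ⟨ha0, hap1.le⟩ ⟨hb0, hbp1.le⟩).1 hGab
  · have hpb : p (2 * N) < b := by
      by_contra! h
      linarith [mem_Iic.1 (hGM ⟨hb0, h⟩)]
    refine (le_or_gt a (p (2 * N))).elim (·.trans_lt hpb) fun hpa => ?_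
    exact (hlast.lt_iff_lt hpa.le hpb.le).1 hGab

/-- If `β > M - m`, then for every `λ ≥ β` the larger right inverse of `G` on `[0,∞)` at
level `λ - β` lies strictly below the smaller right inverse at level `λ`.
Here `G` restricted to `[0,∞)` has exactly `2N` interior local extrema at
`0 < p 1 < … < p (2N)`, encoded by alternating strict monotonicity on the segments
`[p i, p (i+1)]` (with `p 0 = 0`) and on `[p (2N), ∞)`. -/
theorem stmt7
    (G : ℝ → ℝ) (hGc : Continuous G)
    (hG0 : G 0 = 0) (hGpos : ∀ p : ℝ, p ≠ 0 → 0 < G p)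
    (hcoer_top : Tendsto G atTop atTop) (hcoer_bot : Tendsto G atBot atTop)
    (N : ℕ) (hN : 1 ≤ N) (p : ℕ → ℝ)
    (hp0 : p 0 = 0) (hpmono : ∀ i < 2 * N, p i < p (i + 1))
    (hinc : ∀ i < 2 * N, i % 2 = 0 → StrictMonoOn G (Icc (p i) (p (i + 1))))
    (hdec : ∀ i < 2 * N, i % 2 = 1 → StrictAntiOn G (Icc (p i) (p (i + 1))))
    (hlast : StrictMonoOn G (Ici (p (2 * N))))
    (M m : ℝ)
    (hM : IsGreatest ((fun j => G (p (2 * j + 1))) '' {j : ℕ | j < N}) M)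
    (hm : IsLeast ((fun j => G (p (2 * j + 2))) '' {j : ℕ | j < N}) m)
    (β : ℝ) (hβ : M - m < β) :
    ∀ lam : ℝ, β ≤ lam →
      sSup {q : ℝ | 0 ≤ q ∧ G q = lam - β} < sInf {q : ℝ | 0 ≤ q ∧ G q = lam} :=
  stmt7_general G hGc hG0 hcoer_top N hN p hp0 hpmono hinc hdec hlast M m hM hm β hβ
end

section
/- Let a : ℝ → (0,1] be continuous, V : ℝ → [0,1] continuous, β > 0, λ ∈ ℝ, G : ℝ → ℝ continuous, and p₁ < p₂ with G(p₁) = λ - β, G(p₂) = λ and λ - β < G(p) < λ on (p₁, p₂). Fix δ ∈ (0, p₂ - p₁) small enough that G(p₁ + δ) = min{G(p) : p₁ + δ ≤ p ≤ p₂} < λ, and fix h ∈ (0,1) with λ - βh - G(p₁+δ) < -β(1-h). Suppose ℓ₁ < ℓ₂ satisfy V(x) ≥ h for all x ∈ [ℓ₁, ℓ₂], and let L₁ ∈ (ℓ₁, ℓ₂) be such that ∫_{ℓ₁}^{L₁} dx/a(x) = ∫_{L₁}^{ℓ₂} dx/a(x) = y₀ where y₀ > (p₂ - p₁)/(β(1-h)).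 Then every C¹ solution f of a(x)f'(x) + G(f(x)) + βV(x) = λ with p₁ ≤ f ≤ p₂ on ℝ satisfies p₁ ≤ f(x) ≤ p₁ + δ for all x ∈ [L₁, ℓ₂]. -/
open Set MeasureTheory intervalIntegral

/-!
On the hill `V ≥ h`, the equation together with the minimality of `G (p₁ + δ)` gives
`f' ≤ -β(1-h)/a` wherever `f ≥ p₁ + δ`. Integrating over `[ℓ₁, L₁]`, whose `1/a`-length `y₀`
exceeds `(p₂ - p₁)/(β(1-h))`, shows that `f` cannot stay above `p₁ + δ` there; and since `f' < 0`
whenever `f = p₁ + δ`, once `f` is below that level it stays below it up to `ℓ₂`.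
-/

theorem exists_mem_Icc_le_of_hasDerivAt_le {f f' g : ℝ → ℝ} {s t K : ℝ} (hst : s ≤ t)
    (hf : ∀ x ∈ Icc s t, HasDerivAt f (f' x) x) (hg : IntervalIntegrable g volume s t)
    (hf'g : ∀ x ∈ Icc s t, K < f x → f' x ≤ g x) (hlt : ∫ x in s..t, g x < f t - f s) :
    ∃ x ∈ Icc s t, f x ≤ K := by
  by_contra! habove
  have hle : f t - f s ≤ ∫ x in s..t, g x :=
    sub_le_integral_of_hasDeriv_right_of_le hst
      (fun x hx => (hf x hx).continuousAt.continuousWithinAt)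
      (fun x hx => (hf x (Ioo_subset_Icc_self hx)).hasDerivWithinAt)
      ((intervalIntegrable_iff_integrableOn_Icc_of_le hst).mp hg)
      (fun x hx => hf'g x (Ioo_subset_Icc_self hx) (habove x (Ioo_subset_Icc_self hx)))
  linarith

theorem le_of_hasDerivAt_of_eq_imp_neg {f f' : ℝ → ℝ} {s t K : ℝ}
    (hf : ∀ x ∈ Icc s t, HasDerivAt f (f' x) x) (hs : f s ≤ K)
    (hneg : ∀ x ∈ Ico s t, f x = K → f' x < 0) : ∀ x ∈ Icc s t, f x ≤ K :=
  fun _ hx => image_le_of_deriv_right_lt_deriv_boundary'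
    (fun x hx => (hf x hx).continuousAt.continuousWithinAt)
    (fun x hx => (hf x (Ico_subset_Icc_self hx)).hasDerivWithinAt) hs continuousOn_const
    (fun _ _ => hasDerivWithinAt_const _ _ K) hneg hx

theorem stmt10_general
    (a V G : ℝ → ℝ) (ha_cont : Continuous a) (ha : ∀ x, 0 < a x ∧ a x ≤ 1)
    (β lam : ℝ) (hβ : 0 < β) (p₁ p₂ : ℝ) (δ : ℝ)
    (hmin : ∀ q ∈ Icc (p₁ + δ) p₂, G (p₁ + δ) ≤ G q)
    (h : ℝ) (hh1 : h < 1)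
    (hhc : lam - β * h - G (p₁ + δ) < -(β * (1 - h)))
    (ℓ₁ ℓ₂ L₁ : ℝ) (hl₁ : ℓ₁ < L₁) (hl₂ : L₁ < ℓ₂)
    (hhill : ∀ x ∈ Icc ℓ₁ ℓ₂, h ≤ V x)
    (y₀ : ℝ) (hy₀ : (p₂ - p₁) / (β * (1 - h)) < y₀)
    (hint1 : (∫ x in ℓ₁..L₁, 1 / a x) = y₀)
    (f f' : ℝ → ℝ) (hf : ∀ x, HasDerivAt f (f' x) x)
    (hbd : ∀ x, p₁ ≤ f x ∧ f x ≤ p₂)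
    (hsol : ∀ x, a x * f' x + G (f x) + β * V x = lam) :
    ∀ x ∈ Icc L₁ ℓ₂, p₁ ≤ f x ∧ f x ≤ p₁ + δ := by
  have hc : 0 < β * (1 - h) := mul_pos hβ (by linarith)
  have hdesc : ∀ x ∈ Icc ℓ₁ ℓ₂, p₁ + δ ≤ f x → f' x ≤ -(β * (1 - h)) * (1 / a x) := by
    intro x hx hfx
    have hG := hmin _ ⟨hfx, (hbd x).2⟩
    have hV := mul_le_mul_of_nonneg_left (hhill x hx) hβ.le
    rw [mul_one_div, le_div_iff₀ (ha x).1]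
    linarith [hsol x, hhc]
  have hinv : Continuous fun x => 1 / a x :=
    continuous_const.div ha_cont fun x => (ha x).1.ne'
  obtain ⟨x₀, hx₀, hfx₀⟩ : ∃ x₀ ∈ Icc ℓ₁ L₁, f x₀ ≤ p₁ + δ := by
    refine exists_mem_Icc_le_of_hasDerivAt_le hl₁.le (fun x _ => hf x)
      ((hinv.intervalIntegrable _ _).const_mul _)
      (fun x hx hfx => hdesc x ⟨hx.1, hx.2.trans hl₂.le⟩ hfx.le) ?_
    rw [intervalIntegral.integral_const_mul, hint1]
    rw [div_lt_iff₀ hc] at hy₀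
    linarith [(hbd ℓ₁).2, (hbd L₁).1]
  have htrap : ∀ x ∈ Icc x₀ ℓ₂, f x ≤ p₁ + δ :=
    le_of_hasDerivAt_of_eq_imp_neg (fun x _ => hf x) hfx₀ fun x hx hfx =>
      (hdesc x ⟨hx₀.1.trans hx.1, hx.2.le⟩ hfx.ge).trans_lt
        (mul_neg_of_neg_of_pos (neg_neg_of_pos hc) (one_div_pos.mpr (ha x).1))
  exact fun x hx => ⟨(hbd x).1, htrap x ⟨hx₀.2.trans hx.1, hx.2⟩⟩

/-- Deterministic content of Lemma 4.2(a) (hill case): on a hill `V ≥ h` of scaled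
length `2y₀`, every solution with values in `[p₁,p₂]` is trapped in `[p₁, p₁+δ]` on the
second half `[L₁, ℓ₂]`. -/
theorem stmt10
    (a V G : ℝ → ℝ) (ha_cont : Continuous a) (ha : ∀ x, 0 < a x ∧ a x ≤ 1)
    (hV_cont : Continuous V) (hV01 : ∀ x, 0 ≤ V x ∧ V x ≤ 1)
    (hGc : Continuous G) (β lam : ℝ) (hβ : 0 < β)
    (p₁ p₂ : ℝ) (hp : p₁ < p₂)
    (hGp₁ : G p₁ = lam - β) (hGp₂ : G p₂ = lam)
    (hbetw : ∀ q ∈ Ioo p₁ p₂, lam - β < G q ∧ G q < lam)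
    (δ : ℝ) (hδ : 0 < δ) (hδ' : δ < p₂ - p₁)
    (hmin : ∀ q ∈ Icc (p₁ + δ) p₂, G (p₁ + δ) ≤ G q) (hminlt : G (p₁ + δ) < lam)
    (h : ℝ) (hh0 : 0 < h) (hh1 : h < 1)
    (hhc : lam - β * h - G (p₁ + δ) < -(β * (1 - h)))
    (ℓ₁ ℓ₂ L₁ : ℝ) (hl₁ : ℓ₁ < L₁) (hl₂ : L₁ < ℓ₂)
    (hhill : ∀ x ∈ Icc ℓ₁ ℓ₂, h ≤ V x)
    (y₀ : ℝ) (hy₀ : (p₂ - p₁) / (β * (1 - h)) < y₀)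
    (hint1 : (∫ x in ℓ₁..L₁, 1 / a x) = y₀)
    (hint2 : (∫ x in L₁..ℓ₂, 1 / a x) = y₀)
    (f f' : ℝ → ℝ) (hf : ∀ x, HasDerivAt f (f' x) x) (hf'c : Continuous f')
    (hbd : ∀ x, p₁ ≤ f x ∧ f x ≤ p₂)
    (hsol : ∀ x, a x * f' x + G (f x) + β * V x = lam) :
    ∀ x ∈ Icc L₁ ℓ₂, p₁ ≤ f x ∧ f x ≤ p₁ + δ :=
  stmt10_general a V G ha_cont ha β lam hβ p₁ p₂ δ hmin h hh1 hhc ℓ₁ ℓ₂ L₁ hl₁ hl₂ hhill y₀ hy₀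
    hint1 f f' hf hbd hsol
end

section
/- Let a : ℝ → (0,1] be continuous, V : ℝ → [0,1] continuous, β > 0, λ ∈ ℝ, G : ℝ → ℝ continuous, and p₁ < p₂ with G(p₁) = λ - β, G(p₂) = λ and λ - β < G(p) < λ on (p₁, p₂). Fix δ ∈ (0, p₂ - p₁) small enough that G(p₂ - δ) = max{G(p) : p₁ ≤ p ≤ p₂ - δ} > λ - β, and fix h ∈ (0, (λ - G(p₂-δ))/(2β)) so that λ - βh - G(p₂-δ) > βh. Suppose ℓ₁ < ℓ₂ satisfy V(x) ≤ h for all x ∈ [ℓ₁, ℓ₂], and let L₁ ∈ (ℓ₁, ℓ₂) be such that ∫_{ℓ₁}^{L₁} dx/a(x) = ∫_{L₁}^{ℓ₂} dx/a(x) = y₀ with y₀ > (p₂ - p₁)/(βh). Then every C¹ solution f of a(x)f'(x) + G(f(x)) + βV(x) = λ with p₁ ≤ f ≤ p₂ on ℝ satisfies p₂ - δ ≤ f(x) ≤ p₂ for all x ∈ [L₁, ℓ₂]. -/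
open Set MeasureTheory intervalIntegral

/-! While `f ≤ p₂ - δ` inside the valley, the equation forces `a f' > βh`, i.e. `f' > βh / a`.
Integrating over `[ℓ₁, L₁]` would give a rise of `βh y₀ > p₂ - p₁`, so `f` reaches `p₂ - δ`
at some `x₀ ≤ L₁`; and since `f' > 0` at the level `p₂ - δ`, a fencing argument keeps
`f ≥ p₂ - δ` on `[x₀, ℓ₂]`. -/

theorem exists_le_of_sub_lt_integral {f f' φ : ℝ → ℝ} {a b c : ℝ} (hab : a ≤ b)
    (hf : ∀ x ∈ Icc a b, HasDerivAt f (f' x) x) (hφ : IntegrableOn φ (Icc a b))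
    (hφf : ∀ x ∈ Icc a b, f x < c → φ x ≤ f' x) (hgap : c - f a < ∫ x in a..b, φ x) :
    ∃ x ∈ Icc a b, c ≤ f x := by
  by_contra! hbelow
  have hcont : ContinuousOn f (Icc a b) := fun x hx => (hf x hx).continuousAt.continuousWithinAt
  have hint : (∫ x in a..b, φ x) ≤ f b - f a :=
    integral_le_sub_of_hasDeriv_right_of_le hab hcont
      (fun x hx => (hf x (Ioo_subset_Icc_self hx)).hasDerivWithinAt) hφ
      (fun x hx => hφf x (Ioo_subset_Icc_self hx) (hbelow x (Ioo_subset_Icc_self hx)))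
  linarith [hbelow b (right_mem_Icc.2 hab)]

theorem le_of_hasDerivAt_pos_of_eq {f f' : ℝ → ℝ} {a b c : ℝ}
    (hf : ∀ x ∈ Icc a b, HasDerivAt f (f' x) x) (hpos : ∀ x ∈ Ico a b, f x = c → 0 < f' x)
    (ha : c ≤ f a) : ∀ x ∈ Icc a b, c ≤ f x :=
  fun _ hx => image_le_of_deriv_right_lt_deriv_boundary' continuousOn_const
    (fun _ _ => hasDerivWithinAt_const _ _ _) ha
    (fun x hx => (hf x hx).continuousAt.continuousWithinAt)
    (fun x hx => (hf x (Ico_subset_Icc_self hx)).hasDerivWithinAt)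
    (fun x hx hfx => hpos x hx hfx.symm) hx

theorem stmt11_general
    (a V G : ℝ → ℝ) (ha_cont : Continuous a) (ha : ∀ x, 0 < a x ∧ a x ≤ 1)
    (β lam : ℝ) (hβ : 0 < β)
    (p₁ p₂ : ℝ)
    (δ : ℝ) (hδ : 0 < δ)
    (hmax : ∀ q ∈ Icc p₁ (p₂ - δ), G q ≤ G (p₂ - δ))
    (h : ℝ) (hh0 : 0 < h)
    (hhc : β * h < lam - β * h - G (p₂ - δ))
    (ℓ₁ ℓ₂ L₁ : ℝ) (hl₁ : ℓ₁ < L₁) (hl₂ : L₁ < ℓ₂)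
    (hvalley : ∀ x ∈ Icc ℓ₁ ℓ₂, V x ≤ h)
    (y₀ : ℝ) (hy₀ : (p₂ - p₁) / (β * h) < y₀)
    (hint1 : (∫ x in ℓ₁..L₁, 1 / a x) = y₀)
    (f f' : ℝ → ℝ) (hf : ∀ x, HasDerivAt f (f' x) x)
    (hbd : ∀ x, p₁ ≤ f x ∧ f x ≤ p₂)
    (hsol : ∀ x, a x * f' x + G (f x) + β * V x = lam) :
    ∀ x ∈ Icc L₁ ℓ₂, p₂ - δ ≤ f x ∧ f x ≤ p₂ := by
  have hβh : 0 < β * h := mul_pos hβ hh0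
  have hslope : ∀ x ∈ Icc ℓ₁ ℓ₂, f x ≤ p₂ - δ → β * h * (1 / a x) < f' x := by
    intro x hx hfx
    have hG := hmax (f x) ⟨(hbd x).1, hfx⟩
    have hV := mul_le_mul_of_nonneg_left (hvalley x hx) hβ.le
    rw [mul_one_div, div_lt_iff₀ (ha x).1]
    linarith [hsol x]
  have hslope_pos : ∀ x ∈ Icc ℓ₁ ℓ₂, f x ≤ p₂ - δ → 0 < f' x := fun x hx hfx =>
    lt_trans (mul_pos hβh (one_div_pos.2 (ha x).1)) (hslope x hx hfx)
  have hgap : p₂ - δ - f ℓ₁ < ∫ x in ℓ₁..L₁, β * h * (1 / a x) := by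
    rw [intervalIntegral.integral_const_mul, hint1]
    rw [div_lt_iff₀ hβh] at hy₀
    linarith [(hbd ℓ₁).1]
  obtain ⟨x₀, hx₀, hfx₀⟩ := exists_le_of_sub_lt_integral hl₁.le (fun x _ => hf x)
    ((continuous_const.mul (continuous_const.div ha_cont fun x => (ha x).1.ne')).integrableOn_Icc)
    (fun x hx hfx => (hslope x ⟨hx.1, hx.2.trans hl₂.le⟩ hfx.le).le) hgap
  have hfence : ∀ x ∈ Icc x₀ ℓ₂, p₂ - δ ≤ f x := le_of_hasDerivAt_pos_of_eq (fun y _ => hf y)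
    (fun y hy hfy => hslope_pos y ⟨hx₀.1.trans hy.1, hy.2.le⟩ hfy.le) hfx₀
  exact fun x hx => ⟨hfence x ⟨hx₀.2.trans hx.1, hx.2⟩, (hbd x).2⟩

/-- Deterministic content of Lemma 4.2(b) (valley case): on a valley `V ≤ h` of scaled
length `2y₀`, every solution with values in `[p₁,p₂]` is trapped in `[p₂-δ, p₂]` on the
second half `[L₁, ℓ₂]`. -/
theorem stmt11
    (a V G : ℝ → ℝ) (ha_cont : Continuous a) (ha : ∀ x, 0 < a x ∧ a x ≤ 1)
    (hV_cont : Continuous V) (hV01 : ∀ x, 0 ≤ V x ∧ V x ≤ 1)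
    (hGc : Continuous G) (β lam : ℝ) (hβ : 0 < β)
    (p₁ p₂ : ℝ) (hp : p₁ < p₂)
    (hGp₁ : G p₁ = lam - β) (hGp₂ : G p₂ = lam)
    (hbetw : ∀ q ∈ Ioo p₁ p₂, lam - β < G q ∧ G q < lam)
    (δ : ℝ) (hδ : 0 < δ) (hδ' : δ < p₂ - p₁)
    (hmax : ∀ q ∈ Icc p₁ (p₂ - δ), G q ≤ G (p₂ - δ)) (hmaxgt : lam - β < G (p₂ - δ))
    (h : ℝ) (hh0 : 0 < h) (hh1 : h < (lam - G (p₂ - δ)) / (2 * β))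
    (hhc : β * h < lam - β * h - G (p₂ - δ))
    (ℓ₁ ℓ₂ L₁ : ℝ) (hl₁ : ℓ₁ < L₁) (hl₂ : L₁ < ℓ₂)
    (hvalley : ∀ x ∈ Icc ℓ₁ ℓ₂, V x ≤ h)
    (y₀ : ℝ) (hy₀ : (p₂ - p₁) / (β * h) < y₀)
    (hint1 : (∫ x in ℓ₁..L₁, 1 / a x) = y₀)
    (hint2 : (∫ x in L₁..ℓ₂, 1 / a x) = y₀)
    (f f' : ℝ → ℝ) (hf : ∀ x, HasDerivAt f (f' x) x) (hf'c : Continuous f')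
    (hbd : ∀ x, p₁ ≤ f x ∧ f x ≤ p₂)
    (hsol : ∀ x, a x * f' x + G (f x) + β * V x = lam) :
    ∀ x ∈ Icc L₁ ℓ₂, p₂ - δ ≤ f x ∧ f x ≤ p₂ :=
  stmt11_general a V G ha_cont ha β lam hβ p₁ p₂ δ hδ hmax h hh0 hhc ℓ₁ ℓ₂ L₁ hl₁ hl₂ hvalley y₀ hy₀
    hint1 f f' hf hbd hsol
end

section
/- Let a : ℝ → ℝ be continuous with a(x) > 0 for all x, let H : ℝ × ℝ → ℝ be continuous and, for every R > 0, Lipschitz with constant C_R in its first argument on [-R,R] uniformly in x. Let f₁, f₂ : ℝ → ℝ be bounded C¹ functions with a(x)f₁'(x) + H(f₁(x), x) ≤ a(x)f₂'(x) + H(f₂(x), x) for all x. If f₁(x₀) < f₂(x₀) for some x₀, then f₁(x) < f₂(x) for all x ≥ x₀. -/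
/-!
Put `g = f₂ - f₁`. The Lipschitz bound on `H` turns the differential inequality into
`a g' ≥ -C g` wherever `g > 0`, and on a compact interval `a` is bounded below by some `m > 0`,
so `g' ≥ -(C / m) g` there. Hence `exp (K x) g x` with `K = C / m` is nondecreasing up to the
first zero of `g`, which is impossible since it starts positive and ends at `0`.
-/

open Set

lemma pos_on_Icc_of_neg_mul_le_deriv {g g' : ℝ → ℝ} {K a b : ℝ}
    (hcont : ContinuousOn g (Icc a b)) (hderiv : ∀ x ∈ Ioo a b, HasDerivAt g (g' x) x)
    (hK : ∀ x ∈ Ioo a b, 0 < g x → -(K * g x) ≤ g' x) (ha : 0 < g a) :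
    ∀ x ∈ Icc a b, 0 < g x := by
  by_contra! ⟨y, hy, hgy⟩
  have hS : IsCompact (Icc a b ∩ g ⁻¹' Iic 0) :=
    isCompact_Icc.of_isClosed_subset
      (hcont.preimage_isClosed_of_isClosed isClosed_Icc isClosed_Iic) inter_subset_left
  obtain ⟨z, ⟨hz, hgz⟩, hzmin⟩ := hS.exists_isLeast ⟨y, hy, hgy⟩
  have haz : a < z := hz.1.lt_of_ne (by rintro rfl; exact (not_le.2 ha) hgz)
  have hpos : ∀ x ∈ Ioo a z, 0 < g x := fun x hx =>
    not_le.1 fun hgx => (not_le.2 hx.2) (hzmin ⟨⟨hx.1.le, hx.2.le.trans hz.2⟩, hgx⟩)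
  have hIoo : ∀ x ∈ Ioo a z, x ∈ Ioo a b := fun x hx => ⟨hx.1, hx.2.trans_le hz.2⟩
  have hmono : MonotoneOn (fun x => Real.exp (K * x) * g x) (Icc a z) := by
    refine monotoneOn_of_hasDerivWithinAt_nonneg (convex_Icc a z)
      ((Real.continuous_exp.comp (continuous_const.mul continuous_id)).continuousOn.mul
        (hcont.mono (Icc_subset_Icc_right hz.2)))
      (f' := fun x => Real.exp (K * x) * (K * g x + g' x)) (fun x hx => ?_) (fun x hx => ?_)
    · rw [interior_Icc] at hx
      have hexp : HasDerivAt (fun x => Real.exp (K * x)) (Real.exp (K * x) * K) x := by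
        simpa using ((hasDerivAt_id x).const_mul K).exp
      have hψ : HasDerivAt (fun y => Real.exp (K * y) * g y)
          (Real.exp (K * x) * (K * g x + g' x)) x :=
        (hexp.mul (hderiv x (hIoo x hx))).congr_deriv (by ring)
      exact hψ.hasDerivWithinAt
    · rw [interior_Icc] at hx
      exact mul_nonneg (Real.exp_pos _).le (by linarith [hK x (hIoo x hx) (hpos x hx)])
  have hle := hmono (left_mem_Icc.2 haz.le) (right_mem_Icc.2 haz.le) haz.le
  have hz_nonpos : Real.exp (K * z) * g z ≤ 0 :=
    mul_nonpos_of_nonneg_of_nonpos (Real.exp_pos _).le hgz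
  linarith [mul_pos (Real.exp_pos (K * a)) ha]

lemma exists_pos_forall_le_of_continuousOn_Icc {f : ℝ → ℝ} {a b : ℝ} (hab : a ≤ b)
    (hf : ContinuousOn f (Icc a b)) (hpos : ∀ x ∈ Icc a b, 0 < f x) :
    ∃ m > 0, ∀ x ∈ Icc a b, m ≤ f x := by
  obtain ⟨c, hc, hmin⟩ := isCompact_Icc.exists_isMinOn (nonempty_Icc.2 hab) hf
  exact ⟨f c, hpos c hc, hmin⟩

lemma neg_div_mul_le_of_neg_mul_le_mul {A m c u v : ℝ} (hm : 0 < m) (hmA : m ≤ A)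
    (hcu : 0 ≤ c * u) (h : -(c * u) ≤ A * v) : -(c / m * u) ≤ v := by
  have hA : 0 < A := hm.trans_le hmA
  calc -(c / m * u) = -(c * u / m) := by ring
    _ ≤ -(c * u / A) := neg_le_neg (div_le_div_of_nonneg_left hcu hm hmA)
    _ ≤ v := by rw [← neg_div, div_le_iff₀ hA]; linarith

theorem stmt12_general
    (a : ℝ → ℝ) (ha_cont : Continuous a) (ha_pos : ∀ x, 0 < a x)
    (H : ℝ → ℝ → ℝ)
    (hH_lip : ∀ R > (0 : ℝ), ∃ C : ℝ, ∀ p ∈ Icc (-R) R, ∀ q ∈ Icc (-R) R, ∀ x : ℝ,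
      |H p x - H q x| ≤ C * |p - q|)
    (f₁ f₂ f₁' f₂' : ℝ → ℝ)
    (hf₁ : ∀ x, HasDerivAt f₁ (f₁' x) x) (hf₂ : ∀ x, HasDerivAt f₂ (f₂' x) x)
    (hb₁ : ∃ B, ∀ x, |f₁ x| ≤ B) (hb₂ : ∃ B, ∀ x, |f₂ x| ≤ B)
    (hord : ∀ x, a x * f₁' x + H (f₁ x) x ≤ a x * f₂' x + H (f₂ x) x)
    (x₀ : ℝ) (h₀ : f₁ x₀ < f₂ x₀) :
    ∀ x, x₀ ≤ x → f₁ x < f₂ x := by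
  intro x hx
  obtain ⟨B₁, hB₁⟩ := hb₁
  obtain ⟨B₂, hB₂⟩ := hb₂
  set R := max (max B₁ B₂) 1
  obtain ⟨C, hC⟩ := hH_lip R (lt_max_of_lt_right one_pos)
  have hmem₁ : ∀ t, f₁ t ∈ Icc (-R) R := fun t =>
    abs_le.1 ((hB₁ t).trans ((le_max_left _ _).trans (le_max_left _ _)))
  have hmem₂ : ∀ t, f₂ t ∈ Icc (-R) R := fun t =>
    abs_le.1 ((hB₂ t).trans ((le_max_right _ _).trans (le_max_left _ _)))
  have hlip : ∀ t, 0 < f₂ t - f₁ t →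
      -(max C 0 * (f₂ t - f₁ t)) ≤ a t * (f₂' t - f₁' t) := by
    intro t hg
    have h := hC (f₁ t) (hmem₁ t) (f₂ t) (hmem₂ t) t
    rw [abs_sub_comm (f₁ t), abs_of_pos hg] at h
    linarith [(abs_le.1 h).1, hord t, mul_le_mul_of_nonneg_right (le_max_left C 0) hg.le]
  obtain ⟨m, hm, ham⟩ := exists_pos_forall_le_of_continuousOn_Icc hx ha_cont.continuousOn
    fun t _ => ha_pos t
  have hgap : ∀ t ∈ Ioo x₀ x, 0 < f₂ t - f₁ t →
      -(max C 0 / m * (f₂ t - f₁ t)) ≤ f₂' t - f₁' t := fun t ht hg =>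
    neg_div_mul_le_of_neg_mul_le_mul hm (ham t (Ioo_subset_Icc_self ht))
      (mul_nonneg (le_max_right C 0) hg.le) (hlip t hg)
  have hg := pos_on_Icc_of_neg_mul_le_deriv (g := fun t => f₂ t - f₁ t)
    (fun t _ => ((hf₂ t).sub (hf₁ t)).continuousAt.continuousWithinAt)
    (fun t _ => (hf₂ t).sub (hf₁ t)) hgap (sub_pos.2 h₀) x (right_mem_Icc.2 hx)
  exact sub_pos.1 hg

/-- Deterministic core of Lemma A.4 (no-touching/comparison): once an ordered
configuration `f₁(x₀) < f₂(x₀)` occurs, it persists to the right. -/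
theorem stmt12
    (a : ℝ → ℝ) (ha_cont : Continuous a) (ha_pos : ∀ x, 0 < a x)
    (H : ℝ → ℝ → ℝ) (hH_cont : Continuous (fun q : ℝ × ℝ => H q.1 q.2))
    (hH_lip : ∀ R > (0 : ℝ), ∃ C : ℝ, ∀ p ∈ Icc (-R) R, ∀ q ∈ Icc (-R) R, ∀ x : ℝ,
      |H p x - H q x| ≤ C * |p - q|)
    (f₁ f₂ f₁' f₂' : ℝ → ℝ)
    (hf₁ : ∀ x, HasDerivAt f₁ (f₁' x) x) (hf₂ : ∀ x, HasDerivAt f₂ (f₂' x) x)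
    (hf₁c : Continuous f₁') (hf₂c : Continuous f₂')
    (hb₁ : ∃ B, ∀ x, |f₁ x| ≤ B) (hb₂ : ∃ B, ∀ x, |f₂ x| ≤ B)
    (hord : ∀ x, a x * f₁' x + H (f₁ x) x ≤ a x * f₂' x + H (f₂ x) x)
    (x₀ : ℝ) (h₀ : f₁ x₀ < f₂ x₀) :
    ∀ x, x₀ ≤ x → f₁ x < f₂ x :=
  stmt12_general a ha_cont ha_pos H hH_lip f₁ f₂ f₁' f₂' hf₁ hf₂ hb₁ hb₂ hord x₀ h₀
end

section
/- Let a : ℝ → (0,1] be continuous, V : ℝ → [0,1] continuous with V(x) ≥ h on [ℓ₁, ℓ₂] for some h ∈ (0,1), and suppose ∫_{ℓ₁}^{ℓ₂} dx/a(x) = y with β(1-h)·y > 2B. Let f : ℝ → ℝ be C¹ with ‖f‖_∞ ≤ B, solving a(x)f'(x) + G(f(x)) + βV(x) = λ on ℝ for a continuous G and constants λ ∈ ℝ, β > 0, and let δ > 0 satisfy 2β(1-h) ≤ δ. Then there exists x ∈ [ℓ₁, ℓ₂] with G(f(x)) < λ - β + δ. -/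
open Set MeasureTheory intervalIntegral

/-! If `G(f(x)) ≥ λ - β + δ` held on all of `[ℓ₁, ℓ₂]`, the equation would force
`f' ≤ -β(1-h)/a` there; integrating, `f` would drop by at least `β(1-h)y > 2B` across the
interval, which is impossible for `|f| ≤ B`. -/

lemma le_neg_div_of_mul_add_add_eq {a d g v lam β h δ : ℝ} (ha : 0 < a) (hβ : 0 ≤ β)
    (heq : a * d + g + β * v = lam) (hg : lam - β + δ ≤ g) (hv : h ≤ v)
    (hδ : 2 * (β * (1 - h)) ≤ δ) :
    d ≤ -(β * (1 - h)) * (1 / a) := by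
  have hβv : β * h ≤ β * v := mul_le_mul_of_nonneg_left hv hβ
  rw [mul_one_div, le_div_iff₀ ha]
  linarith

theorem stmt16_general
    (a V G : ℝ → ℝ) (ha_cont : Continuous a) (ha : ∀ x, 0 < a x ∧ a x ≤ 1)
    (β lam h y B δ ℓ₁ ℓ₂ : ℝ) (hβ : 0 < β)
    (hl : ℓ₁ ≤ ℓ₂)
    (hhill : ∀ x ∈ Icc ℓ₁ ℓ₂, h ≤ V x)
    (hy : (∫ x in ℓ₁..ℓ₂, 1 / a x) = y)
    (hby : 2 * B < β * (1 - h) * y)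
    (f f' : ℝ → ℝ) (hf : ∀ x, HasDerivAt f (f' x) x)
    (hB : ∀ x, |f x| ≤ B)
    (hsol : ∀ x, a x * f' x + G (f x) + β * V x = lam)
    (hδ2 : 2 * (β * (1 - h)) ≤ δ) :
    ∃ x ∈ Icc ℓ₁ ℓ₂, G (f x) < lam - β + δ := by
  by_contra! hG
  have hslope : ∀ x ∈ Ioo ℓ₁ ℓ₂, f' x ≤ -(β * (1 - h)) * (1 / a x) := fun x hx =>
    le_neg_div_of_mul_add_add_eq (ha x).1 hβ.le (hsol x) (hG x (Ioo_subset_Icc_self hx))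
      (hhill x (Ioo_subset_Icc_self hx)) hδ2
  have hinv : Continuous fun x => 1 / a x :=
    continuous_const.div ha_cont fun x => (ha x).1.ne'
  have hdrop : f ℓ₂ - f ℓ₁ ≤ -(β * (1 - h)) * y := by
    rw [← hy, ← intervalIntegral.integral_const_mul]
    exact sub_le_integral_of_hasDeriv_right_of_le hl
      (fun x _ => (hf x).continuousAt.continuousWithinAt) (fun x _ => (hf x).hasDerivWithinAt)
      ((continuous_const.mul hinv).integrableOn_Icc) hslope
  have hf₁ := abs_le.mp (hB ℓ₁)
  have hf₂ := abs_le.mp (hB ℓ₂)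
  linarith

/-- Key step in Lemma 4.5: on a hill `V ≥ h` of scaled length `y` with `β(1-h)y > 2B`, a
solution bounded by `B` must satisfy `G(f(x)) < λ - β + δ` somewhere on `[ℓ₁, ℓ₂]`,
provided `2β(1-h) ≤ δ`. -/
theorem stmt16
    (a V G : ℝ → ℝ) (ha_cont : Continuous a) (ha : ∀ x, 0 < a x ∧ a x ≤ 1)
    (hV_cont : Continuous V) (hV01 : ∀ x, 0 ≤ V x ∧ V x ≤ 1)
    (hGc : Continuous G)
    (β lam h y B δ ℓ₁ ℓ₂ : ℝ) (hβ : 0 < β)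
    (hh0 : 0 < h) (hh1 : h < 1) (hl : ℓ₁ ≤ ℓ₂)
    (hhill : ∀ x ∈ Icc ℓ₁ ℓ₂, h ≤ V x)
    (hy : (∫ x in ℓ₁..ℓ₂, 1 / a x) = y)
    (hby : 2 * B < β * (1 - h) * y)
    (f f' : ℝ → ℝ) (hf : ∀ x, HasDerivAt f (f' x) x) (hf'c : Continuous f')
    (hB : ∀ x, |f x| ≤ B)
    (hsol : ∀ x, a x * f' x + G (f x) + β * V x = lam)
    (hδ : 0 < δ) (hδ2 : 2 * (β * (1 - h)) ≤ δ) :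
    ∃ x ∈ Icc ℓ₁ ℓ₂, G (f x) < lam - β + δ :=
  stmt16_general a V G ha_cont ha β lam h y B δ ℓ₁ ℓ₂ hβ hl hhill hy hby f f' hf hB hsol hδ2
end

section
/- Let a : ℝ → (0,1] with √a κ-Lipschitz, y₀ ≥ 1, L₁ < L₂ with ∫_{L₁}^{L₂} dx/a(x) = y₀, and r > 0. Define ζ(x) := (y₀ a(x))⁻¹ · 1_{(L₁,L₂)}(x), let ρₙ be an even smooth mollifier supported in [-1/n, 1/n], ζₙ := ζ * ρₙ, and ξₙ(x) := ∫_{-∞}^x ζₙ(s) ds. Then for n > 1/r: ξₙ is C¹, nondecreasing, ξₙ ≡ 0 on (-∞, L₁ - r], ξₙ ≡ 1 on [L₂ + r, ∞), and for all x ∈ [L₁ - r, L₂ + r], a(x)·ξₙ'(x) ≤ 1 + 2κ/(a̲ · n), where a̲ := inf_{x ∈ [L₁ - 2r, L₂ + 2r]} a(x) > 0. In particular, for n > max(1/r, 2κ/a̲), a(x)ξₙ'(x) ≤ 2 on [L₁ - r, L₂ + r]. -/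
open Set MeasureTheory intervalIntegral

/-- `ζ(x) = (y₀ a(x))⁻¹ 1_{(L₁,L₂)}(x)`. -/
noncomputable def zetaFn (a : ℝ → ℝ) (y₀ L₁ L₂ : ℝ) : ℝ → ℝ :=
  Set.indicator (Set.Ioo L₁ L₂) fun u => (y₀ * a u)⁻¹

/-- The mollification `ζₙ = ζ * ρ` (with the even kernel `ρ`). -/
noncomputable def zetaMol (a : ℝ → ℝ) (y₀ L₁ L₂ : ℝ) (ρ : ℝ → ℝ) : ℝ → ℝ :=
  fun x => ∫ t, ρ t * zetaFn a y₀ L₁ L₂ (x + t)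

/-- `ξₙ(x) = ∫_{-∞}^x ζₙ(s) ds`. -/
noncomputable def xiMol (a : ℝ → ℝ) (y₀ L₁ L₂ : ℝ) (ρ : ℝ → ℝ) : ℝ → ℝ :=
  fun x => ∫ s in Set.Iic x, zetaMol a y₀ L₁ L₂ ρ s

/-- The mollified interpolation cutoff from the proof of Theorem 2.5: `ξₙ` is a C¹
nondecreasing function, `≡ 0` left of `L₁ - r`, `≡ 1` right of `L₂ + r`, with
`a ξₙ' ≤ 1 + 2κ/(a̲ n)` on `[L₁ - r, L₂ + r]`; in particular `a ξₙ' ≤ 2` there once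
`n > max(1/r, 2κ/a̲)`. -/
theorem stmt19
    (a : ℝ → ℝ) (ha_cont : Continuous a) (ha : ∀ x, 0 < a x ∧ a x ≤ 1)
    (κ : ℝ) (hκ : 0 ≤ κ)
    (hlip : ∀ x y : ℝ, |Real.sqrt (a x) - Real.sqrt (a y)| ≤ κ * |x - y|)
    (y₀ : ℝ) (hy₀ : 1 ≤ y₀) (L₁ L₂ : ℝ) (hL : L₁ < L₂)
    (hint : (∫ x in L₁..L₂, 1 / a x) = y₀)
    (r : ℝ) (hr : 0 < r)
    (n : ℕ) (hn : 1 / r < (n : ℝ))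
    (ρ : ℝ → ℝ) (hρsm : ContDiff ℝ (⊤ : ℕ∞) ρ) (hρeven : ∀ s, ρ (-s) = ρ s)
    (hρnn : ∀ s, 0 ≤ ρ s) (hρsupp : ∀ s : ℝ, ρ s ≠ 0 → |s| ≤ 1 / n)
    (hρint : (∫ s, ρ s) = 1) :
    0 < sInf (a '' Set.Icc (L₁ - 2 * r) (L₂ + 2 * r)) ∧
    (∀ x, HasDerivAt (xiMol a y₀ L₁ L₂ ρ) (zetaMol a y₀ L₁ L₂ ρ x) x) ∧
    Continuous (zetaMol a y₀ L₁ L₂ ρ) ∧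
    Monotone (xiMol a y₀ L₁ L₂ ρ) ∧
    (∀ x ≤ L₁ - r, xiMol a y₀ L₁ L₂ ρ x = 0) ∧
    (∀ x, L₂ + r ≤ x → xiMol a y₀ L₁ L₂ ρ x = 1) ∧
    (∀ x ∈ Set.Icc (L₁ - r) (L₂ + r),
      a x * zetaMol a y₀ L₁ L₂ ρ x ≤
        1 + 2 * κ / (sInf (a '' Set.Icc (L₁ - 2 * r) (L₂ + 2 * r)) * n)) ∧
    (2 * κ / sInf (a '' Set.Icc (L₁ - 2 * r) (L₂ + 2 * r)) < (n : ℝ) →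
      ∀ x ∈ Set.Icc (L₁ - r) (L₂ + r), a x * zetaMol a y₀ L₁ L₂ ρ x ≤ 2) := by

  -- Basic positivity facts
  have hn0 : (0:ℝ) < n := lt_trans (by positivity) hn
  have hrn : 1 / (n:ℝ) < r := by
    have h1 : 1 < (n:ℝ) * r := by
      have := (div_lt_iff₀ hr).mp hn; linarith
    rw [div_lt_iff₀ hn0]; linarith
  have hy0 : (0:ℝ) < y₀ := lt_of_lt_of_le one_pos hy₀
  set m := sInf (a '' Set.Icc (L₁ - 2 * r) (L₂ + 2 * r)) with hmdef
  -- positivity of m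
  have hAcomp : IsCompact (a '' Set.Icc (L₁ - 2 * r) (L₂ + 2 * r)) :=
    isCompact_Icc.image ha_cont
  have hAne : (a '' Set.Icc (L₁ - 2 * r) (L₂ + 2 * r)).Nonempty :=
    (Set.nonempty_Icc.mpr (by linarith)).image a
  have hm_pos : 0 < m := by
    obtain ⟨x₀, -, hx₀⟩ := hAcomp.sInf_mem hAne
    rw [hmdef, ← hx₀]; exact (ha x₀).1
  have hm_le : ∀ u ∈ Set.Icc (L₁ - 2 * r) (L₂ + 2 * r), m ≤ a u := fun u hu =>
    csInf_le hAcomp.bddBelow ⟨u, hu, rfl⟩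
  -- facts about ζ
  have hζ_nonneg : ∀ u, 0 ≤ zetaFn a y₀ L₁ L₂ u := by
    intro u
    exact Set.indicator_nonneg (fun v _ => inv_nonneg.mpr (mul_nonneg hy0.le (ha v).1.le)) u
  have hζ_le : ∀ u, zetaFn a y₀ L₁ L₂ u ≤ m⁻¹ := by
    intro u
    by_cases hu : u ∈ Set.Ioo L₁ L₂
    · rw [zetaFn, Set.indicator_of_mem hu]
      have hA : u ∈ Set.Icc (L₁ - 2 * r) (L₂ + 2 * r) :=
        ⟨by linarith [hu.1], by linarith [hu.2]⟩
      have h1 : m ≤ y₀ * a u :=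
        le_trans (hm_le u hA) (le_mul_of_one_le_left (ha u).1.le hy₀)
      exact inv_anti₀ hm_pos h1
    · rw [zetaFn, Set.indicator_of_notMem hu]
      exact inv_nonneg.mpr hm_pos.le
  have hζ_meas : Measurable (zetaFn a y₀ L₁ L₂) := by
    refine Measurable.indicator ?_ measurableSet_Ioo
    exact ((continuous_const.mul ha_cont).inv₀
      (fun u => (mul_pos hy0 (ha u).1).ne')).measurable
  have hζ_int : Integrable (zetaFn a y₀ L₁ L₂) := by
    refine IntegrableOn.integrable_indicator ?_ measurableSet_Ioo
    exact (((continuous_const.mul ha_cont).inv₀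
      (fun u => (mul_pos hy0 (ha u).1).ne')).integrableOn_Icc).mono_set Set.Ioo_subset_Icc_self
  -- facts about ρ
  have hρ_cont : Continuous ρ := hρsm.continuous
  have hρ_supp : HasCompactSupport ρ := by
    apply HasCompactSupport.intro (isCompact_Icc (a := -(1/(n:ℝ))) (b := 1/(n:ℝ)))
    intro x hx
    by_contra h
    exact hx ⟨(abs_le.mp (hρsupp x h)).1, (abs_le.mp (hρsupp x h)).2⟩
  have hρ_int : Integrable ρ := hρ_cont.integrable_of_hasCompactSupport hρ_supp
  -- ζₙ is the convolution ρ ⋆ ζ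
  have hneg : ∀ h : ℝ → ℝ, (∫ t, h (-t)) = ∫ t, h t := fun h =>
    (Measure.measurePreserving_neg (volume : Measure ℝ)).integral_comp
      (MeasurableEquiv.neg ℝ).measurableEmbedding h
  have hconv : zetaMol a y₀ L₁ L₂ ρ =
      MeasureTheory.convolution ρ (zetaFn a y₀ L₁ L₂) (ContinuousLinearMap.mul ℝ ℝ) volume := by
    funext x
    rw [MeasureTheory.convolution_def]
    simp only [ContinuousLinearMap.mul_apply']
    have h2 := hneg (fun s => ρ s * zetaFn a y₀ L₁ L₂ (x - s))
    simp only [hρeven, sub_neg_eq_add] at h2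
    exact h2
  have hζₙ_cont : Continuous (zetaMol a y₀ L₁ L₂ ρ) := by
    rw [hconv]
    exact (hρ_supp.contDiff_convolution_left (ContinuousLinearMap.mul ℝ ℝ) (n := 0)
      (contDiff_zero.mpr hρ_cont) hζ_int.locallyIntegrable).continuous
  have hζₙ_nonneg : ∀ x, 0 ≤ zetaMol a y₀ L₁ L₂ ρ x := fun x =>
    integral_nonneg fun t => mul_nonneg (hρnn t) (hζ_nonneg _)
  have hζₙ_zero : ∀ s, s < L₁ - 1/n ∨ L₂ + 1/n < s → zetaMol a y₀ L₁ L₂ ρ s = 0 := by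
    intro s hs
    have h0 : (fun t => ρ t * zetaFn a y₀ L₁ L₂ (s + t)) = fun _ => (0:ℝ) := by
      funext t
      by_cases hρt : ρ t = 0
      · simp [hρt]
      · have ht := abs_le.mp (hρsupp t hρt)
        have hnm : zetaFn a y₀ L₁ L₂ (s + t) = 0 := by
          rw [zetaFn, Set.indicator_of_notMem]
          rintro ⟨h1, h2⟩
          rcases hs with hs | hs
          · linarith [ht.1]
          · linarith [ht.2]
        simp [hnm]
    show (∫ t, ρ t * zetaFn a y₀ L₁ L₂ (s + t)) = 0
    rw [h0, MeasureTheory.integral_zero]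
  have hζₙ_supp : HasCompactSupport (zetaMol a y₀ L₁ L₂ ρ) := by
    apply HasCompactSupport.intro (isCompact_Icc (a := L₁ - 1/(n:ℝ)) (b := L₂ + 1/(n:ℝ)))
    intro s hs
    rw [Set.mem_Icc, not_and_or, not_le, not_le] at hs
    exact hζₙ_zero s hs
  have hζₙ_int : Integrable (zetaMol a y₀ L₁ L₂ ρ) :=
    hζₙ_cont.integrable_of_hasCompactSupport hζₙ_supp
  -- derivative
  have hxi_repr : xiMol a y₀ L₁ L₂ ρ = fun x =>
      (∫ s in Set.Iic (0:ℝ), zetaMol a y₀ L₁ L₂ ρ s) +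
        ∫ s in (0:ℝ)..x, zetaMol a y₀ L₁ L₂ ρ s := by
    funext x
    have h := integral_Iic_sub_Iic (a := (0:ℝ)) (b := x)
      (hζₙ_int.integrableOn) (hζₙ_int.integrableOn)
    show (∫ s in Set.Iic x, zetaMol a y₀ L₁ L₂ ρ s) = _
    linarith
  have hderiv : ∀ x, HasDerivAt (xiMol a y₀ L₁ L₂ ρ) (zetaMol a y₀ L₁ L₂ ρ x) x := by
    intro x
    rw [hxi_repr]
    exact (intervalIntegral.integral_hasDerivAt_right (hζₙ_int.intervalIntegrable)
      hζₙ_cont.aestronglyMeasurable.stronglyMeasurableAtFilter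
      hζₙ_cont.continuousAt).const_add _
  have hmono : Monotone (xiMol a y₀ L₁ L₂ ρ) :=
    monotone_of_deriv_nonneg (fun x => (hderiv x).differentiableAt)
      (fun x => by rw [(hderiv x).deriv]; exact hζₙ_nonneg x)
  -- left value
  have hleft : ∀ x ≤ L₁ - r, xiMol a y₀ L₁ L₂ ρ x = 0 := by
    intro x hx
    refine setIntegral_eq_zero_of_forall_eq_zero fun s hs => ?_
    refine hζₙ_zero s (Or.inl ?_)
    have : s ≤ x := hs
    linarith
  -- total integral is 1
  have hzint : (∫ u, zetaFn a y₀ L₁ L₂ u) = 1 := by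
    rw [zetaFn, MeasureTheory.integral_indicator measurableSet_Ioo]
    have h1 : (∫ u in Set.Ioo L₁ L₂, (y₀ * a u)⁻¹) = ∫ u in L₁..L₂, (y₀ * a u)⁻¹ :=
      ((intervalIntegral.integral_of_le hL.le).trans
        (integral_Ioc_eq_integral_Ioo)).symm
    rw [h1]
    have h2 : ∀ u, (y₀ * a u)⁻¹ = y₀⁻¹ * (1 / a u) := fun u => by
      rw [mul_inv, one_div]
    simp_rw [h2]
    rw [intervalIntegral.integral_const_mul, hint, inv_mul_cancel₀ hy0.ne']
  have htotal : (∫ s, zetaMol a y₀ L₁ L₂ ρ s) = 1 := by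
    rw [hconv, MeasureTheory.integral_convolution _ hρ_int hζ_int, hρint, hzint]
    simp
  have hright : ∀ x, L₂ + r ≤ x → xiMol a y₀ L₁ L₂ ρ x = 1 := by
    intro x hx
    have hioi : (∫ s in Set.Ioi x, zetaMol a y₀ L₁ L₂ ρ s) = 0 := by
      refine setIntegral_eq_zero_of_forall_eq_zero fun s hs => ?_
      refine hζₙ_zero s (Or.inr ?_)
      have : x < s := hs
      linarith
    have h := integral_Iic_add_Ioi (b := x) (hζₙ_int.integrableOn) (hζₙ_int.integrableOn)
    rw [htotal, hioi] at h
    show (∫ s in Set.Iic x, zetaMol a y₀ L₁ L₂ ρ s) = 1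
    linarith
  -- integrability of the convolution integrand
  have hint_t : ∀ x, Integrable fun t => ρ t * zetaFn a y₀ L₁ L₂ (x + t) := by
    intro x
    refine Integrable.mono' (hρ_int.mul_const m⁻¹) ?_ ?_
    · exact (hρ_cont.measurable.mul
        (hζ_meas.comp (measurable_id.const_add x))).aestronglyMeasurable
    · filter_upwards with t
      rw [Real.norm_eq_abs, abs_of_nonneg (mul_nonneg (hρnn t) (hζ_nonneg _))]
      exact mul_le_mul_of_nonneg_left (hζ_le _) (hρnn t)
  -- key estimate
  have hkey : ∀ x ∈ Set.Icc (L₁ - r) (L₂ + r),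
      a x * zetaMol a y₀ L₁ L₂ ρ x ≤ 1 + 2 * κ / (m * n) := by
    intro x hx
    have hC : (0:ℝ) ≤ 1 + 2 * κ / (m * n) := by positivity
    show a x * (∫ t, ρ t * zetaFn a y₀ L₁ L₂ (x + t)) ≤ _
    rw [← MeasureTheory.integral_const_mul]
    have h1 : Integrable (fun t => a x * (ρ t * zetaFn a y₀ L₁ L₂ (x + t))) :=
      (hint_t x).const_mul _
    have h2 : Integrable (fun t => ρ t * (1 + 2 * κ / (m * n))) := hρ_int.mul_const _
    refine le_trans (integral_mono h1 h2 ?_) ?_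
    · intro t
      dsimp only
      by_cases hρt : ρ t = 0
      · simp [hρt]
      · have ht := hρsupp t hρt
        by_cases hmem : x + t ∈ Set.Ioo L₁ L₂
        · have hval : zetaFn a y₀ L₁ L₂ (x + t) = (y₀ * a (x + t))⁻¹ :=
            Set.indicator_of_mem hmem _
          rw [hval, mul_left_comm]
          refine mul_le_mul_of_nonneg_left ?_ (hρnn t)
          have hA : x + t ∈ Set.Icc (L₁ - 2 * r) (L₂ + 2 * r) := by
            have h1 := hmem.1; have h2 := hmem.2
            constructor <;> [linarith; linarith]
          have hma : m ≤ a (x + t) := hm_le _ hA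
          have hapos := (ha (x + t)).1
          have hsq : ∀ u, Real.sqrt (a u) ^ 2 = a u := fun u => Real.sq_sqrt (ha u).1.le
          have hs1 : Real.sqrt (a x) ≤ 1 := Real.sqrt_le_one.mpr (ha x).2
          have hs2 : Real.sqrt (a (x + t)) ≤ 1 := Real.sqrt_le_one.mpr (ha (x + t)).2
          have hsn1 : 0 ≤ Real.sqrt (a x) := Real.sqrt_nonneg _
          have hsn2 : 0 ≤ Real.sqrt (a (x + t)) := Real.sqrt_nonneg _
          have hdiff : |a x - a (x + t)| ≤ 2 * κ * |t| := by
            have hlp := hlip x (x + t)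
            have heq : a x - a (x + t) =
                (Real.sqrt (a x) - Real.sqrt (a (x + t))) *
                  (Real.sqrt (a x) + Real.sqrt (a (x + t))) := by
              linear_combination hsq (x + t) - hsq x
            rw [heq, abs_mul]
            have habs2 : |Real.sqrt (a x) + Real.sqrt (a (x + t))| ≤ 2 :=
              abs_le.mpr ⟨by linarith, by linarith⟩
            calc |Real.sqrt (a x) - Real.sqrt (a (x + t))| *
                  |Real.sqrt (a x) + Real.sqrt (a (x + t))|
                ≤ (κ * |x - (x + t)|) * 2 :=
                  mul_le_mul hlp habs2 (abs_nonneg _) (mul_nonneg hκ (abs_nonneg _))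
              _ = 2 * κ * |t| := by
                  rw [show x - (x + t) = -t by ring, abs_neg]; ring
          have hb1 : (y₀ * a (x + t))⁻¹ ≤ (a (x + t))⁻¹ :=
            inv_anti₀ hapos (le_mul_of_one_le_left hapos.le hy₀)
          have hb2 : a x ≤ a (x + t) + 2 * κ * |t| := by
            have := (abs_le.mp hdiff).2; linarith
          calc a x * (y₀ * a (x + t))⁻¹
              ≤ a x * (a (x + t))⁻¹ := mul_le_mul_of_nonneg_left hb1 (ha x).1.le
            _ ≤ (a (x + t) + 2 * κ * |t|) * (a (x + t))⁻¹ :=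
                mul_le_mul_of_nonneg_right hb2 (inv_nonneg.mpr hapos.le)
            _ = 1 + 2 * κ * |t| / a (x + t) := by field_simp
            _ ≤ 1 + 2 * κ / (m * n) := by
                have hstep : 2 * κ * |t| / a (x + t) ≤ (2 * κ * (1 / n)) / m :=
                  div_le_div₀ (by positivity)
                    (mul_le_mul_of_nonneg_left ht (by positivity)) hm_pos hma
                have heq2 : (2 * κ * (1 / (n:ℝ))) / m = 2 * κ / (m * n) := by
                  rw [mul_one_div, div_div, mul_comm (n:ℝ) m]
                rw [heq2] at hstep
                linarith
        · have h0 : zetaFn a y₀ L₁ L₂ (x + t) = 0 := Set.indicator_of_notMem hmem _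
          rw [h0, mul_zero, mul_zero]
          exact mul_nonneg (hρnn t) hC
    · rw [MeasureTheory.integral_mul_const, hρint, one_mul]
  refine ⟨hm_pos, hderiv, hζₙ_cont, hmono, hleft, hright, hkey, ?_⟩
  intro hlt x hx
  refine le_trans (hkey x hx) ?_
  have h1 : 2 * κ / (m * n) < 1 := by
    rw [← div_div]
    exact (div_lt_one hn0).mpr hlt
  linarith
end
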